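/- arXiv:2512.18255 — 6 statements merged into one kernel-verified Lean document; each statement's English description precedes it below -/
import Mathlib

section
/- (Lower bound on convergence rate in L^p-Wasserstein distance.) Assume the standard Markov chain setup and the L-drift condition L(V,φ,Ψ), and additionally that 𝒳 is a metric space with distance d, that V : 𝒳 → [1,∞) is Lipschitz with Lipschitz constant L_V ∈ (0,∞), and that for some p ∈ [1,∞) both π and P^n(x,·) belong to 𝒫_p(𝒳) for all n ∈ ℕ and x ∈ 𝒳. Pick q ∈ (0,1) and a constant c_q ∈ (0,1) with c_q/L_q(r) ≤ π({V ≥ r}) for all r ≥ 1, where L_q(r) = r φ(1/r) Ψ(r/(1−q)²) D(r) for an increasing D : [1,∞) → [1,∞) tending to infinity. Set f_⋆(r) = (r/2)^p, let h : [1,∞) → [1,∞) be continuous with h/f_⋆ increasing and tending to infinity, and define g(r) = h(r/2)/f_⋆(r/2) for r ∈ [2,∞) and g(r) = (g(2) − 1)(r − 1) + 1 for r ∈ [1,2). Let a_g : [1,∞) → ℝ₊ be continuous with a_g(r) ≤ f_⋆(g^{-1}(r)) c_q / L_q(g^{-1}(r)) for all r ≥ 1, such that A_g(r) := r a_g(r)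 is increasing to infinity with inverse A_g^{-1}. Let v : 𝒳 × ℕ → [1,∞) be increasing in the second argument with P^n(h∘V)(x) ≤ v(x,n) for all x and n. Then (1/(2 L_V))·(a_g ∘ A_g^{-1} ∘ (2^p v))(x,n)^{1/p} ≤ 𝒲_p(P^n(x,·), π) for all x ∈ 𝒳 and all n ∈ ℕ \ {0}. -/
open MeasureTheory ProbabilityTheory Filter Set
open scoped ENNReal NNReal

noncomputable section

/-- A time-homogeneous Markov chain on a measurable space `𝒳`: a Markov transition
kernel `P` together with the path-space law `law x` of the chain started at `x`.
The field `law_markov` is the Markov property: for any event `C` depending only on the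
first `n+1` coordinates, `ℙ_x(C ∩ {X_{n+1} ∈ A}) = ∫_C P(X_n, A) dℙ_x`. -/
structure MarkovChain (𝒳 : Type*) [MeasurableSpace 𝒳] where
  P : ProbabilityTheory.Kernel 𝒳 𝒳
  isMarkov : IsMarkovKernel P
  law : 𝒳 → Measure (ℕ → 𝒳)
  law_prob : ∀ x, IsProbabilityMeasure (law x)
  law_meas : Measurable law
  law_start : ∀ x, law x {ω | ω 0 = x} = 1
  law_markov : ∀ (x : 𝒳) (n : ℕ) (C : Set (ℕ → 𝒳)) (A : Set 𝒳),
    MeasurableSet C → MeasurableSet A →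
    (∀ ω ω' : ℕ → 𝒳, (∀ i ≤ n, ω i = ω' i) → (ω ∈ C ↔ ω' ∈ C)) →
    law x (C ∩ {ω | ω (n + 1) ∈ A}) = ∫⁻ ω in C, P (ω n) A ∂(law x)

namespace MarkovChain

variable {𝒳 : Type*} [MeasurableSpace 𝒳]

/-- `mc.stepDist x n` is the law of `X_n` under `ℙ_x`, i.e. the `n`-step transition
probability `P^n(x, ·)`. -/
def stepDist (mc : MarkovChain 𝒳) (x : 𝒳) (n : ℕ) : Measure 𝒳 :=
  (mc.law x).map (fun ω => ω n)

end MarkovChain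

/-- First hitting time of the set `s` by the path `ω` (equal to `⊤` if `s` is never hit). -/
def hitTime {𝒳 : Type*} (s : Set 𝒳) (ω : ℕ → 𝒳) : ℕ∞ :=
  ⨅ (n : ℕ) (_ : ω n ∈ s), (n : ℕ∞)

/-- First return time to `B` after time `k` : `τ_B(k) = inf {n ≥ k : ω n ∈ B}`. -/
def returnTime {𝒳 : Type*} (B : Set 𝒳) (k : ℕ) (ω : ℕ → 𝒳) : ℕ∞ :=
  ⨅ (n : ℕ) (_ : k ≤ n ∧ ω n ∈ B), (n : ℕ∞)

/-- The set of paths along which `V` has `limsup_{n→∞} V(X_n) = ∞`. -/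
def nonConfined {𝒳 : Type*} (V : 𝒳 → ℝ) : Set (ℕ → 𝒳) :=
  {ω | ∀ M : ℝ, ∃ᶠ n in atTop, M < V (ω n)}

/-- The `f`-variation distance between two (finite) measures:
`‖μ - ν‖_f = sup { |∫ g dμ - ∫ g dν| : g measurable, |g| ≤ f }`. -/
def fVar {𝒳 : Type*} [MeasurableSpace 𝒳] (f : 𝒳 → ℝ) (μ ν : Measure 𝒳) : ℝ :=
  ⨆ g : {g : 𝒳 → ℝ // Measurable g ∧ ∀ x, |g x| ≤ f x},
    |(∫ x, (g : 𝒳 → ℝ) x ∂μ) - ∫ x, (g : 𝒳 → ℝ) x ∂ν|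

/-- The standard setup: ergodic Markov chain with invariant probability measure `π`;
the chain is Feller, positive Harris recurrent and converges to `π` in total variation
from every starting point (hence aperiodic and `π`-irreducible). -/
structure StdSetup {𝒳 : Type*} [TopologicalSpace 𝒳] [MeasurableSpace 𝒳]
    (mc : MarkovChain 𝒳) where
  π : Measure 𝒳
  π_prob : IsProbabilityMeasure π
  π_inv : π.bind (fun x => mc.P x) = π
  feller : ∀ (n : ℕ) (O : Set 𝒳), IsOpen O →
    LowerSemicontinuous fun x => (mc.stepDist x n O).toReal
  harris : ∀ (x : 𝒳) (A : Set 𝒳), MeasurableSet A → 0 < π A →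
    mc.law x {ω | ∃ᶠ n in atTop, ω n ∈ A} = 1
  ergodic_tv : ∀ x : 𝒳,
    Tendsto (fun n => fVar (fun _ => (1 : ℝ)) (mc.stepDist x n) π) atTop (nhds 0)

/-- The L-drift condition `L(V, φ, Ψ)` of the paper. -/
structure LDrift {𝒳 : Type*} [TopologicalSpace 𝒳] [MeasurableSpace 𝒳]
    (mc : MarkovChain 𝒳) (V : 𝒳 → ℝ) (φ : ℝ → ℝ) (Ψ : ℝ → ℝ) where
  V_one_le : ∀ x, 1 ≤ V x
  V_cont : Continuous V
  nonconf : ∀ x, mc.law x (nonConfined V) = 1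
  ℓ₀ : ℝ
  one_le_ℓ₀ : 1 ≤ ℓ₀
  φ_nonneg : ∀ r ∈ Set.Ioc (0 : ℝ) 1, 0 ≤ φ r
  φ_cont : ContinuousOn φ (Set.Ioc 0 1)
  rφ_anti : StrictAntiOn (fun r => r * φ (1 / r)) (Set.Ici (1 : ℝ))
  rφ_lim : Tendsto (fun r => r * φ (1 / r)) atTop (nhds 0)
  b : ℝ
  b_nonneg : 0 ≤ b
  drift : ∀ x, (∫ y, (V y)⁻¹ ∂(mc.P x)) - φ ((V x)⁻¹) ≤
    (V x)⁻¹ - (if V x ≤ ℓ₀ then b else 0)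
  Ψ_one_le : ∀ r, 1 ≤ r → 1 ≤ Ψ r
  Ψ_diff : DifferentiableOn ℝ Ψ (Set.Ici 1)
  Ψ_mono : StrictMonoOn Ψ (Set.Ici 1)
  Ψ_submul : ∃ C : ℝ, 0 < C ∧ ∀ r₁ r₂, 1 ≤ r₁ → 1 ≤ r₂ → Ψ (r₁ + r₂) ≤ C * Ψ r₁ * Ψ r₂
  Cconst : ℝ → ℝ → ℝ
  Cconst_mem : ∀ ℓ m, ℓ₀ < ℓ → 0 < m → Cconst ℓ m ∈ Set.Ioo (0 : ℝ) 1
  hit_lb : ∀ ℓ m, ℓ₀ < ℓ → 0 < m → ∀ r, ℓ + m < r → ∀ x, ℓ + m ≤ V x →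
    ENNReal.ofReal (Cconst ℓ m / Ψ r) ≤
      mc.law x {ω | hitTime {y | r < V y} ω < hitTime {y | V y < ℓ} ω}

/-- `G_h(r) = q (1-q) h(r) / (r φ(1/r))`. -/
def Gfun (q : ℝ) (φ h : ℝ → ℝ) (r : ℝ) : ℝ := q * (1 - q) * h r / (r * φ (1 / r))

/-- A function is locally integrable at infinity if it is integrable on `[l, ∞)`
for some `l ≥ 0`. -/
def L1locInfty (f : ℝ → ℝ) : Prop := ∃ l : ℝ, 0 ≤ l ∧ MeasureTheory.IntegrableOn f (Set.Ici l)

open scoped Classical in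
/-- The modulated sum `∑_{k=0}^{T(ω)} h(V(ω_k))` (with value in `ℝ≥0∞`, the sum being a
series when `T(ω) = ∞`). -/
def modSum {𝒳 : Type*} (h : ℝ → ℝ) (V : 𝒳 → ℝ) (T : (ℕ → 𝒳) → ℕ∞) (ω : ℕ → 𝒳) : ℝ≥0∞ :=
  ∑' n : ℕ, if (n : ℕ∞) ≤ T ω then ENNReal.ofReal (h (V (ω n))) else 0

/-- Convergence in distribution of a sequence of laws on `ℝ`: integrals of bounded
continuous functions converge. -/
def TendstoInDistribution (μs : ℕ → Measure ℝ) (ν : Measure ℝ) : Prop :=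
  ∀ f : BoundedContinuousFunction ℝ ℝ,
    Tendsto (fun n => ∫ z, f z ∂(μs n)) atTop (nhds (∫ z, f z ∂ν))

/-- The ergodic average `S_n(g)(ω) = (1/n) ∑_{k=0}^{n-1} g(ω_k)`. -/
def ergAvg {𝒳 : Type*} (g : 𝒳 → ℝ) (n : ℕ) (ω : ℕ → 𝒳) : ℝ :=
  (∑ k ∈ Finset.range n, g (ω k)) / n

/-- The CLT holds for the ergodic average `S_n(g)`: there is `σ² ∈ (0,∞)` with
`√n (S_n(g) − π(g)) → N(0,σ²)` in distribution for every starting state. -/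
def CLTholds {𝒳 : Type*} [MeasurableSpace 𝒳] (mc : MarkovChain 𝒳) (π : Measure 𝒳)
    (g : 𝒳 → ℝ) : Prop :=
  ∃ σ2 : NNReal, 0 < σ2 ∧ ∀ x : 𝒳,
    TendstoInDistribution
      (fun n => (mc.law x).map fun ω => Real.sqrt n * (ergAvg g n ω - ∫ y, g y ∂π))
      (gaussianReal 0 σ2)

end

/-- The `p`-th power Wasserstein functional: infimum over couplings `γ` of `μ` and `ν`
of `∫ d(x,y)^p dγ`. The `L^p`-Wasserstein distance is its `p`-th root. -/
noncomputable def wassersteinPow {𝒳 : Type*} [MeasurableSpace 𝒳] [PseudoMetricSpace 𝒳] (p : ℝ)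
    (μ ν : Measure 𝒳) : ℝ≥0∞ :=
  ⨅ (γ : Measure (𝒳 × 𝒳)) (_ : γ.map Prod.fst = μ) (_ : γ.map Prod.snd = ν),
    ∫⁻ z, ENNReal.ofReal (dist z.1 z.2 ^ p) ∂γ

/-- `μ ∈ 𝒫_p(𝒳)`: finite `p`-th moment of the distance to some point. -/
def HasFiniteMoment {𝒳 : Type*} [MeasurableSpace 𝒳] [PseudoMetricSpace 𝒳] (p : ℝ)
    (μ : Measure 𝒳) : Prop :=
  ∃ x₀ : 𝒳, ∫⁻ x, ENNReal.ofReal (dist x₀ x ^ p) ∂μ ≠ ⊤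

/-!
Put `t = A_g⁻¹(2^p v(x,n))` and `r = g⁻¹(t)`. The linear piece of `g` on `[1, 2)` forces
`r ≥ 2`, and then `s = a_g(t) / (r/2)^p` satisfies `P^n(h ∘ V)(x) ≤ s h(r/2)` and
`s ≤ c_q / L_q(r) ≤ π(V ≥ r)`. Test every coupling of `P^n(x, ·)` and `π` against the ramp
`G = clamp01 (2V/r - 1)`, which is `2L_V/r`-Lipschitz, vanishes on `{V ≤ r/2}` and equals `1` on
`{V ≥ r}`: since `x ↦ x^p` has slope at most `p` on `[0, 1]`,
`s ≤ π(G^p) ≤ (2L_V/r)^p W_p^p + p P^n G(x)`. As `h/f⋆` is increasing,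
`h(V) ≥ h(r/2) (2V/r)^p` on `{V ≥ r/2}`, so Markov's inequality gives
`p P^n G(x) ≤ (1 - 2^{-p}) s`. Hence `W_p^p ≥ 2^{-p} s (r / (2L_V))^p = a_g(t) / (2L_V)^p`.
-/

lemma one_add_le_two_rpow {p : ℝ} (hp : 1 ≤ p) : 1 + p ≤ (2 : ℝ) ^ p := by
  have := one_add_mul_self_le_rpow_one_add (by norm_num : (-1 : ℝ) ≤ 1) hp
  norm_num at this
  linarith

/-- Bernoulli's inequality at `a`: the slope `p a^(p-1)` of `x ↦ x^p` there is at most `p`. -/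
lemma rpow_le_abs_sub_rpow_add_mul {p a b : ℝ} (hp : 1 ≤ p) (ha0 : 0 ≤ a) (ha1 : a ≤ 1)
    (hb : 0 ≤ b) : a ^ p ≤ |a - b| ^ p + p * b := by
  have hp0 : 0 < p := by linarith
  rcases le_or_gt a b with hab | hba
  · have : a ^ p ≤ a := Real.rpow_le_self_of_le_one ha0 ha1 hp
    nlinarith [Real.rpow_nonneg (abs_nonneg (a - b)) p]
  have ha : 0 < a := hb.trans_lt hba
  replace hba := hba.le
  have hbern := one_add_mul_self_le_rpow_one_add
    (show (-1 : ℝ) ≤ (a - b) / a - 1 by have := div_nonneg (sub_nonneg.2 hba) ha.le; linarith) hp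
  rw [add_sub_cancel, Real.div_rpow (sub_nonneg.2 hba) ha.le] at hbern
  have hap : 0 < a ^ p := Real.rpow_pos_of_pos ha p
  have hslope : a ^ (p - 1) ≤ 1 := Real.rpow_le_one ha0 ha1 (by linarith)
  have hpow : a ^ p = a ^ (p - 1) * a := by
    rw [Real.rpow_sub ha, Real.rpow_one, div_mul_cancel₀ _ ha.ne']
  rw [abs_of_nonneg (sub_nonneg.2 hba)]
  rw [le_div_iff₀ hap] at hbern
  have : (1 + p * ((a - b) / a - 1)) * a ^ p = a ^ p - p * b * a ^ (p - 1) := by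
    rw [hpow]; field_simp; ring
  nlinarith [mul_le_mul_of_nonneg_left hslope (mul_nonneg hp0.le hb)]

lemma rpow_half_mul_lt_one {p r c : ℝ} (hp : 0 < p) (hr0 : 0 ≤ r) (hr : r < 2) (hc : c ≤ 1) :
    (r / 2) ^ p * c < 1 := by
  have h0 : 0 ≤ (r / 2) ^ p := Real.rpow_nonneg (by linarith) p
  have h1 : (r / 2) ^ p < 1 := Real.rpow_lt_one (by linarith) (by linarith) hp
  nlinarith

lemma ofReal_div_rpow_le_rpow_inv {W : ℝ≥0∞} {c K p : ℝ} (hp : 0 < p) (hc : 0 ≤ c) (hK : 0 < K)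
    (hW : ENNReal.ofReal (c / K ^ p) ≤ W) : ENNReal.ofReal (c ^ (1 / p) / K) ≤ W ^ (1 / p) := by
  rwa [one_div, ENNReal.le_rpow_inv_iff hp, ENNReal.ofReal_rpow_of_nonneg (by positivity) hp.le,
    Real.div_rpow (by positivity) hK.le, ← Real.rpow_mul hc, inv_mul_cancel₀ hp.ne',
    Real.rpow_one]

lemma le_of_lintegral_ofReal_le {α : Type*} [MeasurableSpace α] {μ : Measure α}
    [IsProbabilityMeasure μ] {f : α → ℝ} {c b : ℝ} (hc : 0 < c) (hf : ∀ y, c ≤ f y)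
    (hb : ∫⁻ y, ENNReal.ofReal (f y) ∂μ ≤ ENNReal.ofReal b) : c ≤ b := by
  have hconst : ∫⁻ _, ENNReal.ofReal c ∂μ ≤ ∫⁻ y, ENNReal.ofReal (f y) ∂μ :=
    lintegral_mono fun y => ENNReal.ofReal_le_ofReal (hf y)
  rw [lintegral_const, measure_univ, mul_one] at hconst
  exact (ENNReal.ofReal_le_ofReal_iff'.1 (hconst.trans hb)).resolve_right hc.not_ge

def clamp01 (τ : ℝ) : ℝ := min 1 (max τ 0)

lemma clamp01_nonneg (τ : ℝ) : 0 ≤ clamp01 τ := le_min zero_le_one (le_max_right _ _)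

lemma clamp01_le_one (τ : ℝ) : clamp01 τ ≤ 1 := min_le_left _ _

lemma clamp01_of_one_le {τ : ℝ} (hτ : 1 ≤ τ) : clamp01 τ = 1 :=
  min_eq_left (le_max_of_le_left hτ)

lemma clamp01_of_nonpos {τ : ℝ} (hτ : τ ≤ 0) : clamp01 τ = 0 := by
  rw [clamp01, max_eq_right hτ, min_eq_right zero_le_one]

lemma lipschitzWith_clamp01 : LipschitzWith 1 clamp01 :=
  (LipschitzWith.id.max_const 0).const_min 1

lemma mul_clamp01_sub_one_le {p τ : ℝ} (hp : 1 ≤ p) (hτ : 0 ≤ τ) :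
    p * clamp01 (τ - 1) ≤ (1 - ((2 : ℝ) ^ p)⁻¹) * τ ^ p := by
  have h2p := one_add_le_two_rpow hp
  have h2p0 : 0 < (2 : ℝ) ^ p := by linarith
  have hε : ((2 : ℝ) ^ p)⁻¹ * (1 + p) ≤ 1 := by
    rw [inv_mul_le_iff₀ h2p0]; linarith
  have hε1 : 0 ≤ 1 - ((2 : ℝ) ^ p)⁻¹ := by
    have : 0 ≤ ((2 : ℝ) ^ p)⁻¹ := by positivity
    nlinarith
  rcases le_total τ 1 with hτ1 | hτ1
  · rw [clamp01_of_nonpos (by linarith), mul_zero]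
    positivity
  rcases le_total 2 τ with hτ2 | hτ2
  · have hτp : (2 : ℝ) ^ p ≤ τ ^ p := Real.rpow_le_rpow (by norm_num) hτ2 (by linarith)
    rw [clamp01_of_one_le (by linarith), mul_one]
    calc p ≤ (1 - ((2 : ℝ) ^ p)⁻¹) * (2 : ℝ) ^ p := by
          rw [sub_mul, inv_mul_cancel₀ h2p0.ne']; linarith
      _ ≤ _ := mul_le_mul_of_nonneg_left hτp hε1
  · have hbern := one_add_mul_self_le_rpow_one_add (show (-1 : ℝ) ≤ τ - 1 by linarith) hp
    rw [add_sub_cancel] at hbern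
    rw [clamp01, max_eq_left (by linarith), min_eq_right (by linarith)]
    have : 0 ≤ ((2 : ℝ) ^ p)⁻¹ := by positivity
    nlinarith [mul_le_mul_of_nonneg_left hbern hε1]

lemma mul_div_rpow_le_of_monotoneOn {h : ℝ → ℝ} {p a b : ℝ}
    (hh : MonotoneOn (fun r => h r / (r / 2) ^ p) (Ici 1)) (ha : 1 ≤ a) (hab : a ≤ b) :
    h a * (b / a) ^ p ≤ h b := by
  have ha2 : 0 < (a / 2) ^ p := Real.rpow_pos_of_pos (by linarith) p
  have hb2 : 0 < (b / 2) ^ p := Real.rpow_pos_of_pos (by linarith) p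
  have hmono := hh ha (ha.trans hab : (1 : ℝ) ≤ b) hab
  rw [div_le_div_iff₀ ha2 hb2] at hmono
  rw [show b / a = (b / 2) / (a / 2) by field_simp, Real.div_rpow (by linarith) (by linarith),
    mul_div_assoc', div_le_iff₀ ha2]
  linarith

lemma monotoneOn_of_monotoneOn_div_rpow {h : ℝ → ℝ} {p : ℝ} (hp : 0 ≤ p)
    (hh0 : ∀ r, 1 ≤ r → 0 ≤ h r) (hh : MonotoneOn (fun r => h r / (r / 2) ^ p) (Ici 1)) :
    MonotoneOn h (Ici 1) := fun a (ha : 1 ≤ a) b _ hab =>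
  calc h a ≤ h a * (b / a) ^ p :=
        le_mul_of_one_le_right (hh0 a ha) (Real.one_le_rpow ((one_le_div₀ (by linarith)).2 hab) hp)
    _ ≤ h b := mul_div_rpow_le_of_monotoneOn hh ha hab

lemma lipschitzWith_clamp01_ramp {𝒳 : Type*} [PseudoMetricSpace 𝒳] {K : ℝ≥0} {V : 𝒳 → ℝ}
    (hV : LipschitzWith K V) {r : ℝ} (hr : 0 < r) :
    LipschitzWith (2 * K / r).toNNReal fun x => clamp01 (2 * V x / r - 1) :=
  LipschitzWith.of_dist_le_mul fun x y => by
    rw [Real.coe_toNNReal _ (by positivity)]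
    calc dist (clamp01 (2 * V x / r - 1)) (clamp01 (2 * V y / r - 1))
        ≤ dist (2 * V x / r - 1) (2 * V y / r - 1) := by
          simpa using lipschitzWith_clamp01.dist_le_mul (2 * V x / r - 1) (2 * V y / r - 1)
      _ = 2 / r * dist (V x) (V y) := by
          rw [Real.dist_eq, Real.dist_eq, ← abs_of_pos (by positivity : 0 < 2 / r), ← abs_mul]
          ring_nf
      _ ≤ 2 / r * (K * dist x y) := by gcongr; exact hV.dist_le_mul x y
      _ = 2 * K / r * dist x y := by ring

lemma mul_clamp01_ramp_le {h : ℝ → ℝ} {p r u : ℝ} (hp : 1 ≤ p) (hh1 : ∀ r, 1 ≤ r → 1 ≤ h r)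
    (hh : MonotoneOn (fun r => h r / (r / 2) ^ p) (Ici 1)) (hr : 2 ≤ r) (hu : 1 ≤ u) :
    p * clamp01 (2 * u / r - 1) ≤ (1 - ((2 : ℝ) ^ p)⁻¹) / h (r / 2) * h u := by
  have hr0 : 0 < r := by linarith
  have hhr : 0 < h (r / 2) := by linarith [hh1 (r / 2) (by linarith)]
  have hε : 0 ≤ 1 - ((2 : ℝ) ^ p)⁻¹ :=
    sub_nonneg.2 (inv_le_one_of_one_le₀ (Real.one_le_rpow (by norm_num) (by linarith)))
  rcases lt_or_ge u (r / 2) with hu2 | hu2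
  · have : 2 * u / r - 1 ≤ 0 := by rw [sub_nonpos, div_le_one hr0]; linarith
    rw [clamp01_of_nonpos this, mul_zero]
    have := hh1 u hu
    positivity
  have hgrowth := mul_div_rpow_le_of_monotoneOn hh (by linarith) hu2
  rw [show u / (r / 2) = 2 * u / r by field_simp] at hgrowth
  calc p * clamp01 (2 * u / r - 1) ≤ (1 - ((2 : ℝ) ^ p)⁻¹) * (2 * u / r) ^ p :=
        mul_clamp01_sub_one_le hp (by positivity)
    _ ≤ (1 - ((2 : ℝ) ^ p)⁻¹) / h (r / 2) * h u := by
        rw [div_mul_eq_mul_div, le_div_iff₀ hhr, mul_assoc, mul_comm _ (h (r / 2))]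
        gcongr

section Wasserstein

variable {𝒳 : Type*} [PseudoMetricSpace 𝒳] [MeasurableSpace 𝒳] [OpensMeasurableSpace 𝒳]
  {p : ℝ} {K : ℝ≥0} {G : 𝒳 → ℝ} {μ ν : Measure 𝒳}

lemma lintegral_rpow_le_of_coupling (hp : 1 ≤ p) (hG : LipschitzWith K G)
    (hG0 : ∀ x, 0 ≤ G x) (hG1 : ∀ x, G x ≤ 1) {γ : Measure (𝒳 × 𝒳)}
    (hγμ : γ.map Prod.fst = μ) (hγν : γ.map Prod.snd = ν) :
    ∫⁻ y, ENNReal.ofReal (G y ^ p) ∂ν ≤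
      ENNReal.ofReal (K ^ p) * ∫⁻ z, ENNReal.ofReal (dist z.1 z.2 ^ p) ∂γ +
        ∫⁻ x, ENNReal.ofReal (p * G x) ∂μ := by
  have hp0 : 0 ≤ p := by linarith
  have hGm : Measurable G := hG.continuous.measurable
  subst hγμ hγν
  rw [lintegral_map (by fun_prop) measurable_snd, lintegral_map (by fun_prop) measurable_fst,
    ← lintegral_const_mul' _ _ ENNReal.ofReal_ne_top,
    ← lintegral_add_right _ (by fun_prop)]
  refine lintegral_mono fun z => ?_
  have hlip : |G z.2 - G z.1| ^ p ≤ K ^ p * dist z.1 z.2 ^ p := by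
    rw [← Real.mul_rpow K.coe_nonneg dist_nonneg]
    refine Real.rpow_le_rpow (abs_nonneg _) ?_ hp0
    simpa [Real.dist_eq, dist_comm z.1] using hG.dist_le_mul z.2 z.1
  calc ENNReal.ofReal (G z.2 ^ p)
      ≤ ENNReal.ofReal (|G z.2 - G z.1| ^ p + p * G z.1) :=
        ENNReal.ofReal_le_ofReal (rpow_le_abs_sub_rpow_add_mul hp (hG0 _) (hG1 _) (hG0 _))
    _ ≤ ENNReal.ofReal (|G z.2 - G z.1| ^ p) + ENNReal.ofReal (p * G z.1) :=
        ENNReal.ofReal_add_le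
    _ ≤ ENNReal.ofReal (K ^ p) * ENNReal.ofReal (dist z.1 z.2 ^ p) +
          ENNReal.ofReal (p * G z.1) := by
        rw [← ENNReal.ofReal_mul (by positivity)]
        gcongr

theorem ofReal_le_wassersteinPow_of_lipschitz (hp : 1 ≤ p) (hK : 0 < K)
    (hG : LipschitzWith K G) (hG0 : ∀ x, 0 ≤ G x) (hG1 : ∀ x, G x ≤ 1) {a b : ℝ} (hb : 0 ≤ b)
    (hν : ENNReal.ofReal a ≤ ∫⁻ y, ENNReal.ofReal (G y ^ p) ∂ν)
    (hμ : ∫⁻ x, ENNReal.ofReal (p * G x) ∂μ ≤ ENNReal.ofReal b) :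
    ENNReal.ofReal ((a - b) / K ^ p) ≤ wassersteinPow p μ ν := by
  have hKp : 0 < (K : ℝ) ^ p := Real.rpow_pos_of_pos hK p
  refine le_iInf fun γ => le_iInf fun hγμ => le_iInf fun hγν => ?_
  have hγ := (hν.trans (lintegral_rpow_le_of_coupling hp hG hG0 hG1 hγμ hγν)).trans
    (add_le_add_right hμ _)
  rw [← ENNReal.mul_le_mul_iff_right (ENNReal.ofReal_pos.2 hKp).ne' ENNReal.ofReal_ne_top,
    ← ENNReal.ofReal_mul hKp.le, mul_div_cancel₀ _ hKp.ne', ENNReal.ofReal_sub _ hb]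
  exact tsub_le_iff_right.2 hγ

theorem ofReal_le_wassersteinPow_of_tail (hp : 1 ≤ p) (hK : 0 < K) {V : 𝒳 → ℝ}
    (hV : LipschitzWith K V) (hV1 : ∀ x, 1 ≤ V x) {h : ℝ → ℝ} (hh1 : ∀ r, 1 ≤ r → 1 ≤ h r)
    (hh : MonotoneOn (fun r => h r / (r / 2) ^ p) (Ici 1)) {r s : ℝ} (hr : 2 ≤ r) (hs : 0 ≤ s)
    (hμ : ∫⁻ x, ENNReal.ofReal (h (V x)) ∂μ ≤ ENNReal.ofReal (s * h (r / 2)))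
    (hν : ENNReal.ofReal s ≤ ν {x | r ≤ V x}) :
    ENNReal.ofReal ((r / 2) ^ p * s / (2 * K) ^ p) ≤ wassersteinPow p μ ν := by
  have hr0 : 0 < r := by linarith
  have hhr : 0 < h (r / 2) := by linarith [hh1 (r / 2) (by linarith)]
  set ε : ℝ := ((2 : ℝ) ^ p)⁻¹
  have hε1 : ε ≤ 1 := inv_le_one_of_one_le₀ (Real.one_le_rpow (by norm_num) (by linarith))
  set G : 𝒳 → ℝ := fun x => clamp01 (2 * V x / r - 1)
  have hG := lipschitzWith_clamp01_ramp hV hr0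
  have hGν : ENNReal.ofReal s ≤ ∫⁻ y, ENNReal.ofReal (G y ^ p) ∂ν := by
    have hmarkov := mul_meas_ge_le_lintegral₀
      (hG.continuous.measurable.pow_const p).ennreal_ofReal.aemeasurable (μ := ν) 1
    rw [one_mul] at hmarkov
    refine hν.trans ((measure_mono fun x (hx : r ≤ V x) => ?_).trans hmarkov)
    have : 1 ≤ 2 * V x / r - 1 := by rw [le_sub_iff_add_le, le_div_iff₀ hr0]; linarith
    simp [clamp01_of_one_le this]
  have hGμ : ∫⁻ x, ENNReal.ofReal (p * G x) ∂μ ≤ ENNReal.ofReal ((1 - ε) * s) :=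
    calc ∫⁻ x, ENNReal.ofReal (p * G x) ∂μ
        ≤ ∫⁻ x, ENNReal.ofReal ((1 - ε) / h (r / 2)) * ENNReal.ofReal (h (V x)) ∂μ :=
          lintegral_mono fun x => by
            rw [← ENNReal.ofReal_mul (div_nonneg (by linarith) hhr.le)]
            exact ENNReal.ofReal_le_ofReal (mul_clamp01_ramp_le hp hh1 hh hr (hV1 x))
      _ ≤ ENNReal.ofReal ((1 - ε) / h (r / 2)) * ENNReal.ofReal (s * h (r / 2)) := by
          rw [lintegral_const_mul' _ _ ENNReal.ofReal_ne_top]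
          gcongr
      _ = ENNReal.ofReal ((1 - ε) * s) := by
          rw [← ENNReal.ofReal_mul (div_nonneg (by linarith) hhr.le)]
          congr 1
          field_simp
  convert ofReal_le_wassersteinPow_of_lipschitz hp (Real.toNNReal_pos.2 (by positivity)) hG
    (fun _ => clamp01_nonneg _) (fun _ => clamp01_le_one _) (by nlinarith) hGν hGμ using 2
  rw [Real.coe_toNNReal _ (by positivity), Real.div_rpow (by positivity) hr0.le,
    Real.div_rpow hr0.le (by norm_num)]
  simp only [ε]
  field_simp
  ring

end Wasserstein

lemma MarkovChain.isProbabilityMeasure_stepDist {𝒳 : Type*} [MeasurableSpace 𝒳]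
    (mc : MarkovChain 𝒳) (x : 𝒳) (n : ℕ) : IsProbabilityMeasure (mc.stepDist x n) :=
  have := mc.law_prob x
  Measure.isProbabilityMeasure_map (measurable_pi_apply n).aemeasurable

lemma eq_div_rpow_mul_of_div_rpow_eq {h : ℝ → ℝ} {p r t a v : ℝ} (hr : 0 < r)
    (hgr : h (r / 2) / (r / 4) ^ p = t) (hta : t * a = 2 ^ p * v) :
    v = a / (r / 2) ^ p * h (r / 2) := by
  have hr4 : 0 < (r / 4) ^ p := Real.rpow_pos_of_pos (by linarith) p
  rw [← hgr] at hta
  rw [show (r / 2) ^ p = 2 ^ p * (r / 4) ^ p by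
    rw [← Real.mul_rpow (by norm_num) (by linarith)]; ring_nf]
  field_simp at hta ⊢
  linarith

/-- On `[1, 2)` the function `g` is the linear interpolation between `g 1 = 1` and
`g 2 = 2^p h(1)`, so `r < 2` would force `a(t) ≥ 1`, which the bound on `a` forbids. -/
lemma two_le_of_linear_below_two {g h a : ℝ → ℝ} {p r t v c : ℝ} (hp : 0 < p) (hh1 : 1 ≤ h 1)
    (hg2 : g 2 = h 1 / (2 / 4) ^ p)
    (hg_lt2 : ∀ r, 1 ≤ r → r < 2 → g r = (g 2 - 1) * (r - 1) + 1)
    (hr : 1 ≤ r) (hgr : g r = t) (ht : t * a t = 2 ^ p * v) (hv : h 1 ≤ v)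
    (ha : a t ≤ (r / 2) ^ p * c) (hc : c ≤ 1) : 2 ≤ r := by
  by_contra! hr2
  have h2p : (2 : ℝ) ^ p * h 1 = g 2 := by
    rw [hg2, show (2 : ℝ) / 4 = 2⁻¹ by norm_num, Real.inv_rpow (by norm_num), div_inv_eq_mul,
      mul_comm]
  have h2p1 : 1 ≤ (2 : ℝ) ^ p := Real.one_le_rpow (by norm_num) hp.le
  have hg2_ge : 1 ≤ g 2 := by nlinarith
  have ht_le : t ≤ (2 : ℝ) ^ p * v := by
    rw [← hgr, hg_lt2 r hr hr2]; nlinarith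
  have ht1 : 1 ≤ t := by rw [← hgr, hg_lt2 r hr hr2]; nlinarith
  have hat : 1 ≤ a t := by nlinarith
  linarith [rpow_half_mul_lt_one hp (by linarith) hr2 hc]

theorem wasserstein_convergence_lower_bound_general
    {𝒳 : Type*} [MetricSpace 𝒳]
    [MeasurableSpace 𝒳] [BorelSpace 𝒳]
    (mc : MarkovChain 𝒳) (setup : StdSetup mc)
    (V : 𝒳 → ℝ) (φ Ψ : ℝ → ℝ) (ld : LDrift mc V φ Ψ)
    (p : ℝ) (hp : 1 ≤ p)
    (LV : ℝ) (hLV : 0 < LV) (hVLip : ∀ x y : 𝒳, |V x - V y| ≤ LV * dist x y)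
    (Lq : ℝ → ℝ) (cq : ℝ)
    (hcq_tail : ∀ r, 1 ≤ r → ENNReal.ofReal (cq / Lq r) ≤ setup.π {x | r ≤ V x})
    (h : ℝ → ℝ) (h_one_le : ∀ r, 1 ≤ r → 1 ≤ h r)
    (hhf_mono : StrictMonoOn (fun r => h r / (r / 2) ^ p) (Set.Ici 1))
    (g : ℝ → ℝ)
    (hg_ge2 : ∀ r, 2 ≤ r → g r = h (r / 2) / (r / 4) ^ p)
    (hg_lt2 : ∀ r, 1 ≤ r → r < 2 → g r = (g 2 - 1) * (r - 1) + 1)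
    (ginv : ℝ → ℝ) (hginv_left : ∀ r, 1 ≤ r → ginv (g r) = r)
    (hginv_right : ∀ t, 1 ≤ t → g (ginv t) = t ∧ 1 ≤ ginv t)
    (a : ℝ → ℝ) (ha_nonneg : ∀ r, 0 ≤ a r)
    (ha_le : ∀ r, 1 ≤ r → a r ≤ (ginv r / 2) ^ p * cq / Lq (ginv r))
    (Ainv : ℝ → ℝ)
    (hAinv_right : ∀ t, 1 * a 1 ≤ t → Ainv t * a (Ainv t) = t ∧ 1 ≤ Ainv t)
    (v : 𝒳 → ℕ → ℝ)
    (hv : ∀ (x : 𝒳) (n : ℕ),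
      ∫⁻ y, ENNReal.ofReal (h (V y)) ∂(mc.stepDist x n) ≤ ENNReal.ofReal (v x n)) :
    ∀ (x : 𝒳) (n : ℕ), n ≠ 0 →
      ENNReal.ofReal ((a (Ainv ((2 : ℝ) ^ p * v x n))) ^ (1 / p) / (2 * LV)) ≤
        (wassersteinPow p (mc.stepDist x n) setup.π) ^ (1 / p) := by
  intro x n _
  have := setup.π_prob
  have := mc.isProbabilityMeasure_stepDist x n
  have hp0 : 0 < p := by linarith
  have htail (r : ℝ) (hr : 1 ≤ r) : cq / Lq r ≤ 1 :=
    ENNReal.ofReal_le_one.1 ((hcq_tail r hr).trans prob_le_one)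
  have ha_le' (t : ℝ) (ht : 1 ≤ t) : a t ≤ (ginv t / 2) ^ p * (cq / Lq (ginv t)) :=
    mul_div_assoc (G := ℝ) .. ▸ ha_le t ht
  have hh1v : h 1 ≤ v x n := le_of_lintegral_ofReal_le (by linarith [h_one_le 1 le_rfl])
    (fun y => monotoneOn_of_monotoneOn_div_rpow hp0.le (fun r hr => by linarith [h_one_le r hr])
      hhf_mono.monotoneOn (mem_Ici.2 le_rfl) (ld.V_one_le y) (ld.V_one_le y)) (hv x n)
  have ha1 : 1 * a 1 ≤ 2 ^ p * v x n := by
    have hginv1 : ginv 1 = 1 := by simpa [hg_lt2 1 le_rfl one_lt_two] using hginv_left 1 le_rfl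
    nlinarith [hginv1 ▸ ha_le' 1 le_rfl, h_one_le 1 le_rfl, Real.one_le_rpow one_le_two hp0.le,
      rpow_half_mul_lt_one hp0 zero_le_one one_lt_two (htail 1 le_rfl)]
  obtain ⟨hta, ht1⟩ := hAinv_right _ ha1
  set t := Ainv (2 ^ p * v x n)
  obtain ⟨hgr, hr1⟩ := hginv_right t ht1
  set r := ginv t
  have hr2 : 2 ≤ r := two_le_of_linear_below_two hp0 (h_one_le 1 le_rfl)
    (by norm_num [hg_ge2 2 le_rfl]) hg_lt2 hr1 hgr hta hh1v (ha_le' t ht1) (htail r hr1)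
  have hr2p : 0 < (r / 2) ^ p := Real.rpow_pos_of_pos (by linarith) p
  have hs : a t / (r / 2) ^ p ≤ cq / Lq r := by
    rw [div_le_iff₀ hr2p, mul_comm]; exact ha_le' t ht1
  have hLV' : (LV.toNNReal : ℝ) = LV := Real.coe_toNNReal _ hLV.le
  have hW := ofReal_le_wassersteinPow_of_tail hp (Real.toNNReal_pos.2 hLV)
    (LipschitzWith.of_dist_le_mul fun x y => by rw [hLV']; exact hVLip x y) ld.V_one_le h_one_le
    hhf_mono.monotoneOn hr2 (div_nonneg (ha_nonneg t) hr2p.le)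
    (eq_div_rpow_mul_of_div_rpow_eq (by linarith) (hg_ge2 r hr2 ▸ hgr) hta ▸ hv x n)
    ((ENNReal.ofReal_le_ofReal hs).trans (hcq_tail r hr1))
  rw [mul_div_cancel₀ _ hr2p.ne', hLV'] at hW
  exact ofReal_div_rpow_le_rpow_inv hp0 (ha_nonneg t) (by positivity) hW

/-- **Theorem (lower bound on the convergence rate in the `L^p`-Wasserstein distance).**
Under the standard setup and the L-drift condition, on a metric space with `V` Lipschitz
(constant `L_V`) and `π, P^n(x,·) ∈ 𝒫_p(𝒳)`: with `f⋆(r) = (r/2)^p`,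
`g(r) = h(r/2)/f⋆(r/2)` for `r ≥ 2` (linearly interpolated on `[1,2)`), inverse `ginv`,
`a_g(r) ≤ f⋆(g⁻¹(r)) c_q/L_q(g⁻¹(r))` with `A_g(r) = r a_g(r)` increasing to infinity
with inverse `Ainv`, and `P^n(h∘V)(x) ≤ v(x,n)`: for all `x` and `n ≥ 1`,
`(1/(2L_V)) (a_g ∘ A_g⁻¹ ∘ 2^p v)(x,n)^{1/p} ≤ 𝒲_p(P^n(x,·), π)`. -/
theorem wasserstein_convergence_lower_bound
    {𝒳 : Type*} [MetricSpace 𝒳] [LocallyCompactSpace 𝒳]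
    [MeasurableSpace 𝒳] [BorelSpace 𝒳]
    (mc : MarkovChain 𝒳) (setup : StdSetup mc)
    (V : 𝒳 → ℝ) (φ Ψ : ℝ → ℝ) (ld : LDrift mc V φ Ψ)
    (p : ℝ) (hp : 1 ≤ p)
    (LV : ℝ) (hLV : 0 < LV) (hVLip : ∀ x y : 𝒳, |V x - V y| ≤ LV * dist x y)
    (hmomπ : HasFiniteMoment p setup.π)
    (hmomP : ∀ (x : 𝒳) (n : ℕ), HasFiniteMoment p (mc.stepDist x n))
    (q : ℝ) (hq : q ∈ Set.Ioo (0 : ℝ) 1)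
    (D : ℝ → ℝ) (D_one_le : ∀ r, 1 ≤ r → 1 ≤ D r)
    (D_mono : StrictMonoOn D (Set.Ici 1)) (D_tendsto : Tendsto D atTop atTop)
    (Lq : ℝ → ℝ) (hLq : ∀ r, Lq r = r * φ (1 / r) * Ψ (r / (1 - q) ^ 2) * D r)
    (cq : ℝ) (hcq : cq ∈ Set.Ioo (0 : ℝ) 1)
    (hcq_tail : ∀ r, 1 ≤ r → ENNReal.ofReal (cq / Lq r) ≤ setup.π {x | r ≤ V x})
    (h : ℝ → ℝ) (h_one_le : ∀ r, 1 ≤ r → 1 ≤ h r) (h_cont : ContinuousOn h (Set.Ici 1))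
    (hhf_mono : StrictMonoOn (fun r => h r / (r / 2) ^ p) (Set.Ici 1))
    (hhf_tendsto : Tendsto (fun r => h r / (r / 2) ^ p) atTop atTop)
    (g : ℝ → ℝ)
    (hg_ge2 : ∀ r, 2 ≤ r → g r = h (r / 2) / (r / 4) ^ p)
    (hg_lt2 : ∀ r, 1 ≤ r → r < 2 → g r = (g 2 - 1) * (r - 1) + 1)
    (ginv : ℝ → ℝ) (hginv_left : ∀ r, 1 ≤ r → ginv (g r) = r)
    (hginv_right : ∀ t, 1 ≤ t → g (ginv t) = t ∧ 1 ≤ ginv t)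
    (a : ℝ → ℝ) (ha_cont : ContinuousOn a (Set.Ici 1)) (ha_nonneg : ∀ r, 0 ≤ a r)
    (ha_le : ∀ r, 1 ≤ r → a r ≤ (ginv r / 2) ^ p * cq / Lq (ginv r))
    (hA_mono : StrictMonoOn (fun r => r * a r) (Set.Ici 1))
    (hA_tendsto : Tendsto (fun r => r * a r) atTop atTop)
    (Ainv : ℝ → ℝ) (hAinv_left : ∀ r, 1 ≤ r → Ainv (r * a r) = r)
    (hAinv_right : ∀ t, 1 * a 1 ≤ t → Ainv t * a (Ainv t) = t ∧ 1 ≤ Ainv t)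
    (v : 𝒳 → ℕ → ℝ) (hv_one_le : ∀ x n, 1 ≤ v x n) (hv_mono : ∀ x, Monotone (v x))
    (hv : ∀ (x : 𝒳) (n : ℕ),
      ∫⁻ y, ENNReal.ofReal (h (V y)) ∂(mc.stepDist x n) ≤ ENNReal.ofReal (v x n)) :
    ∀ (x : 𝒳) (n : ℕ), n ≠ 0 →
      ENNReal.ofReal ((a (Ainv ((2 : ℝ) ^ p * v x n))) ^ (1 / p) / (2 * LV)) ≤
        (wassersteinPow p (mc.stepDist x n) setup.π) ^ (1 / p) :=
  wasserstein_convergence_lower_bound_general mc setup V φ Ψ ld p hp LV hLV hVLip Lq cq hcq_tail h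
    h_one_le hhf_mono g hg_ge2 hg_lt2 ginv hginv_left hginv_right a ha_nonneg ha_le Ainv hAinv_right
    v hv
end

section
/- (Non-confinement.) Let X = (X_n)_{n∈ℕ} be a Markov chain with transition kernel P on a measurable space (𝒳, ℬ(𝒳)) and let V : 𝒳 → [1,∞) be measurable. If for every u ≥ 1 there exists n₀ ∈ ℕ such that inf_{x ∈ 𝒳} P^{n₀}(x, {V ≥ u}) > 0, then the non-confinement property holds: ℙ_x( limsup_{n→∞} V(X_n) = ∞ ) = 1 for every x ∈ 𝒳. -/
open MeasureTheory ProbabilityTheory Filter Set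
open scoped ENNReal NNReal

/-! If from every starting point the chain is in `{V ≥ u}` after `n₀` steps with probability
at least `δ > 0`, then, by the Markov property at the times `N, N + n₀, N + 2 n₀, …`, the
probability of staying in `{V < u}` at the first `j` of them is at most `(1 - δ)^j`. Hence
`V(X_n) < u` eventually has probability zero for each `u`, and a countable union over `u ∈ ℕ`
gives `limsup V(X_n) = ∞` almost surely. -/

namespace MarkovChain

variable {𝒳 : Type*} [MeasurableSpace 𝒳] (mc : MarkovChain 𝒳)

instance isProbabilityMeasure_stepDist_s6 (x : 𝒳) (n : ℕ) :
    IsProbabilityMeasure (mc.stepDist x n) :=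
  have := mc.law_prob x
  Measure.isProbabilityMeasure_map (measurable_pi_apply n).aemeasurable

lemma measurable_stepDist (n : ℕ) : Measurable fun x => mc.stepDist x n :=
  (Measure.measurable_map _ (measurable_pi_apply n)).comp mc.law_meas

lemma stepDist_zero (x : 𝒳) : mc.stepDist x 0 = Measure.dirac x := by
  have := mc.law_prob x
  have hstart := mc.law_start x
  ext A hA
  rw [stepDist, Measure.map_apply (measurable_pi_apply 0) hA, Measure.dirac_apply' _ hA]
  by_cases hx : x ∈ A
  · rw [indicator_of_mem hx, Pi.one_apply]
    refine le_antisymm prob_le_one (hstart ▸ ?_)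
    exact measure_mono fun ω hω => by simp_all
  · -- `{ω | ω 0 = x}` need not be measurable, but it has full measure and misses the preimage.
    have hdisj : Disjoint ((fun ω : ℕ → 𝒳 => ω 0) ⁻¹' A) {ω | ω 0 = x} :=
      disjoint_left.mpr fun ω hω hωx => hx (by simp_all)
    have hunion := measure_union' (μ := mc.law x) hdisj (measurable_pi_apply 0 hA)
    rw [hstart] at hunion
    have hle := ENNReal.le_sub_of_add_le_right ENNReal.one_ne_top (hunion ▸ prob_le_one)
    rw [indicator_of_notMem hx, ← nonpos_iff_eq_zero]
    simpa using hle

lemma restrict_map_succ (x : 𝒳) {n : ℕ} {C : Set (ℕ → 𝒳)} (hC : MeasurableSet C)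
    (hCn : DependsOn (· ∈ C) (Iic n)) :
    ((mc.law x).restrict C).map (· (n + 1)) = (((mc.law x).restrict C).map (· n)).bind mc.P := by
  ext A hA
  rw [Measure.map_apply (measurable_pi_apply _) hA,
    Measure.restrict_apply (measurable_pi_apply _ hA), inter_comm,
    Measure.bind_apply hA mc.P.measurable.aemeasurable,
    lintegral_map (mc.P.measurable_coe hA) (measurable_pi_apply n)]
  exact mc.law_markov x n C A hC hA fun ω ω' h => Iff.of_eq (hCn fun i hi => h i hi)

lemma stepDist_succ (x : 𝒳) (n : ℕ) : mc.stepDist x (n + 1) = (mc.stepDist x n).bind mc.P := by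
  simpa [stepDist] using mc.restrict_map_succ x MeasurableSet.univ fun _ _ _ => rfl

lemma restrict_map_add (x : 𝒳) {n : ℕ} {C : Set (ℕ → 𝒳)} (hC : MeasurableSet C)
    (hCn : DependsOn (· ∈ C) (Iic n)) (k : ℕ) :
    ((mc.law x).restrict C).map (· (n + k)) =
      (((mc.law x).restrict C).map (· n)).bind (mc.stepDist · k) := by
  induction k with
  | zero => simp [stepDist_zero]
  | succ k ih =>
    rw [← add_assoc, mc.restrict_map_succ x hC (hCn.mono (Iic_subset_Iic.mpr le_self_add)), ih,
      Measure.bind_bind (mc.measurable_stepDist k).aemeasurable mc.P.measurable.aemeasurable]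
    simp_rw [stepDist_succ]

lemma measure_inter_le_mul (x : 𝒳) {n m : ℕ} {C : Set (ℕ → 𝒳)} (hC : MeasurableSet C)
    (hCn : DependsOn (· ∈ C) (Iic n)) {S : Set 𝒳} (hS : MeasurableSet S) {r : ℝ≥0∞}
    (hr : ∀ y, mc.stepDist y m S ≤ r) :
    mc.law x (C ∩ {ω | ω (n + m) ∈ S}) ≤ r * mc.law x C := by
  calc mc.law x (C ∩ {ω | ω (n + m) ∈ S})
      = (((mc.law x).restrict C).map (· n)).bind (mc.stepDist · m) S := by
        rw [← mc.restrict_map_add x hC hCn, Measure.map_apply (measurable_pi_apply _) hS,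
          Measure.restrict_apply (measurable_pi_apply _ hS), inter_comm]
        rfl
    _ = ∫⁻ y, mc.stepDist y m S ∂(((mc.law x).restrict C).map (· n)) :=
        Measure.bind_apply hS (mc.measurable_stepDist m).aemeasurable
    _ ≤ ∫⁻ _, r ∂(((mc.law x).restrict C).map (· n)) := lintegral_mono hr
    _ = r * mc.law x C := by
        rw [lintegral_const, Measure.map_apply (measurable_pi_apply n) MeasurableSet.univ,
          preimage_univ, Measure.restrict_apply_univ]

lemma law_forall_le_mem_le_pow (x : 𝒳) {m : ℕ} {S : Set 𝒳} (hS : MeasurableSet S) {r : ℝ≥0∞}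
    (hr : ∀ y, mc.stepDist y m S ≤ r) (N j : ℕ) :
    mc.law x {ω | ∀ i ≤ j, ω (N + i * m) ∈ S} ≤ r ^ j := by
  have := mc.law_prob x
  induction j with
  | zero => simpa using prob_le_one
  | succ j ih =>
    have hsucc : {ω : ℕ → 𝒳 | ∀ i ≤ j + 1, ω (N + i * m) ∈ S} =
        {ω | ∀ i ≤ j, ω (N + i * m) ∈ S} ∩ {ω | ω (N + j * m + m) ∈ S} := by
      ext ω
      simp [Nat.le_succ_iff, or_imp, forall_and, add_mul, add_assoc]
    have hmeas : MeasurableSet {ω : ℕ → 𝒳 | ∀ i ≤ j, ω (N + i * m) ∈ S} := by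
      simp only [ofPred_forall]
      exact .iInter fun i => .iInter fun _ => measurable_pi_apply _ hS
    have hdep : DependsOn (· ∈ {ω : ℕ → 𝒳 | ∀ i ≤ j, ω (N + i * m) ∈ S}) (Iic (N + j * m)) :=
      fun ω ω' h => by
        simp only [mem_ofPred_eq]
        exact propext (forall₂_congr fun i hi => by rw [h _ (by simp only [mem_Iic]; gcongr)])
    calc mc.law x {ω | ∀ i ≤ j + 1, ω (N + i * m) ∈ S}
        ≤ r * mc.law x {ω | ∀ i ≤ j, ω (N + i * m) ∈ S} :=
          hsucc ▸ mc.measure_inter_le_mul x hmeas hdep hS hr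
      _ ≤ r * r ^ j := by gcongr
      _ = r ^ (j + 1) := (pow_succ' r j).symm

lemma law_eventually_mem_eq_zero (x : 𝒳) {m : ℕ} {S : Set 𝒳} (hS : MeasurableSet S)
    {r : ℝ≥0∞} (hr1 : r < 1) (hr : ∀ y, mc.stepDist y m S ≤ r) :
    mc.law x {ω | ∀ᶠ n in atTop, ω n ∈ S} = 0 := by
  have hsub : {ω : ℕ → 𝒳 | ∀ᶠ n in atTop, ω n ∈ S} ⊆
      ⋃ N : ℕ, ⋂ j : ℕ, {ω | ∀ i ≤ j, ω (N + i * m) ∈ S} := fun ω hω =>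
    have ⟨N, hN⟩ := eventually_atTop.mp hω
    mem_iUnion.mpr ⟨N, mem_iInter.mpr fun _ _ _ => hN _ le_self_add⟩
  refine measure_mono_null hsub (measure_iUnion_null fun N => le_antisymm ?_ zero_le)
  exact ge_of_tendsto' (ENNReal.tendsto_pow_atTop_nhds_zero_of_lt_one hr1) fun j =>
    (measure_mono (iInter_subset _ j)).trans (mc.law_forall_le_mem_le_pow x hS hr N j)

lemma ae_frequently_mem (x : 𝒳) {A : Set 𝒳} (hA : MeasurableSet A) {n₀ : ℕ}
    (h : 0 < ⨅ y, mc.stepDist y n₀ A) : ∀ᵐ ω ∂mc.law x, ∃ᶠ n in atTop, ω n ∈ A := by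
  have hr : ∀ y, mc.stepDist y n₀ Aᶜ ≤ 1 - ⨅ y, mc.stepDist y n₀ A := fun y => by
    rw [prob_compl_eq_one_sub hA]
    exact tsub_le_tsub_left (iInf_le (fun y => mc.stepDist y n₀ A) y) 1
  simpa [ae_iff, not_frequently] using mc.law_eventually_mem_eq_zero x hA.compl
    (ENNReal.sub_lt_self ENNReal.one_ne_top one_ne_zero h.ne') hr

end MarkovChain

/-- **Lemma (non-confinement).** If for every `u ≥ 1` there exists `n₀ ∈ ℕ` with
`inf_{x ∈ 𝒳} P^{n₀}(x, {V ≥ u}) > 0`, then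
`ℙ_x(limsup_{n→∞} V(X_n) = ∞) = 1` for every `x ∈ 𝒳`. -/
theorem nonconfinement_of_uniform_excursion
    {𝒳 : Type*} [MeasurableSpace 𝒳]
    (mc : MarkovChain 𝒳) (V : 𝒳 → ℝ) (V_meas : Measurable V)
    (hV : ∀ u : ℝ, 1 ≤ u → ∃ n₀ : ℕ,
      0 < ⨅ x : 𝒳, mc.stepDist x n₀ {y | u ≤ V y}) :
    ∀ x : 𝒳, mc.law x (nonConfined V) = 1 := by
  intro x
  have := mc.law_prob x
  have hfreq : ∀ᵐ ω ∂mc.law x, ∀ k : ℕ, ∃ᶠ n in atTop, ω n ∈ {y | (k : ℝ) + 1 ≤ V y} :=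
    ae_all_iff.mpr fun k =>
      have ⟨_, hn₀⟩ := hV (k + 1) (le_add_of_nonneg_left k.cast_nonneg)
      mc.ae_frequently_mem x (measurableSet_le measurable_const V_meas) hn₀
  have hconf : ∀ᵐ ω ∂mc.law x, ω ∈ nonConfined V := hfreq.mono fun ω hω M =>
    have ⟨k, hk⟩ := exists_nat_ge M
    (hω k).mono fun _ hn => hk.trans_lt ((lt_add_one _).trans_le hn)
  exact (measure_congr (ae_eq_univ.mpr (ae_iff.mp hconf))).trans measure_univ
end

section
/- (Maximal inequality.) Let (ℱ_n)_{n∈ℕ} be a filtration on a probability space and ξ = (ξ_n)_{n∈ℕ} an (ℱ_n)-adapted process taking values in [0,1]. Define the (ℱ_n)-stopping time τ_r = inf{n ∈ ℕ : ξ_n > r} (inf ∅ = ∞), and assume that for some r ∈ (0,1] and a locally bounded measurable function f : ℕ × [0,1] → ℝ₊, the process ( ξ_{n∧τ_r} − Σ_{j=0}^{n∧τ_r − 1} f(j, ξ_j) )_{n∈ℕ} is an (ℱ_n)-supermartingale. Then for any t ∈ ℕ, almost surely: ℙ( sup_{j ∈ [0,t)∩ℕ} ξ_j > r | ℱ₀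 ) ≤ r^{-1} ( ξ₀ + 𝔼[ Σ_{j=0}^{(t∧τ_r) − 1} f(j, ξ_j) | ℱ₀ ] ). -/
open MeasureTheory ProbabilityTheory Filter Set
open scoped ENNReal NNReal

/-- First time the process `ξ` exceeds the level `r` (`⊤` if never). -/
noncomputable def hitTimeGT {Ω : Type*} (ξ : ℕ → Ω → ℝ) (r : ℝ) (ω : Ω) : ℕ∞ :=
  ⨅ (n : ℕ) (_ : r < ξ n ω), (n : ℕ∞)

/-! With `τ = τ_r` and `Y` the given supermartingale, the stopped value `ξ_{t∧τ}` exceeds `r`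
on the event `{∃ j < t, ξ_j > r}` (there `τ < t`) and is nonnegative elsewhere, so
`r · 1_A ≤ ξ_{t∧τ} = Y_t + ∑_{j < t∧τ} f(j, ξ_j)`. Conditioning on `ℱ₀` and using
`𝔼[Y_t | ℱ₀] ≤ Y_0 = ξ_0` gives the bound. The sum is integrable, being the difference of the
bounded `ξ_{t∧τ}` and the integrable `Y_t`. -/

namespace MeasureTheory

theorem Supermartingale.condExp_le_add_condExp_sub {Ω ι : Type*} {m0 : MeasurableSpace Ω}
    {μ : Measure Ω} [Preorder ι] {ℱ : Filtration ι m0} {Y : ι → Ω → ℝ}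
    (hY : Supermartingale Y ℱ μ) {g X : Ω → ℝ} (hg : Integrable g μ) (hX : Integrable X μ)
    (hgX : g ≤ᵐ[μ] X) {i j : ι} (hij : i ≤ j) :
    μ[g|ℱ i] ≤ᵐ[μ] Y i + μ[X - Y j|ℱ i] := by
  have hYj := hY.integrable j
  filter_upwards [condExp_mono (m := ℱ i) hg hX hgX, condExp_add hYj (hX.sub hYj) (ℱ i),
    hY.condExp_ae_le hij] with ω hgX hadd hsuper
  calc μ[g|ℱ i] ω ≤ μ[Y j + (X - Y j)|ℱ i] ω := by rwa [add_sub_cancel]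
    _ ≤ Y i ω + μ[X - Y j|ℱ i] ω := by rw [hadd, Pi.add_apply]; exact add_le_add_left hsuper _

end MeasureTheory

lemma ENat.toNat_eq_untopA {x : ℕ∞} (hx : x ≠ ⊤) : x.toNat = x.untopA := by
  lift x to ℕ using hx
  rfl

section HitTimeGT

variable {Ω : Type*}

lemma stoppedProcess_apply_eq_toNat {β : Type*} (u : ℕ → Ω → β) (τ : Ω → ℕ∞) (n : ℕ)
    (ω : Ω) : stoppedProcess u τ n ω = u (min (n : ℕ∞) (τ ω)).toNat ω := by
  rw [ENat.toNat_eq_untopA (min_lt_of_left_lt (ENat.natCast_lt_top n)).ne]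
  rfl

lemma hitTimeGT_eq_hittingAfter (ξ : ℕ → Ω → ℝ) (r : ℝ) :
    hitTimeGT ξ r = hittingAfter ξ (Ioi r) 0 := by
  ext1 ω
  refine le_antisymm ?_ (le_iInf₂ fun n hn => hittingAfter_le_of_mem n.zero_le hn)
  cases hτ : hittingAfter ξ (Ioi r) 0 ω with
  | top => exact le_top
  | coe n =>
    have hn := hittingAfter_mem_set_of_ne_top (hτ ▸ WithTop.coe_ne_top)
    rw [hτ] at hn
    exact iInf₂_le n hn

lemma stoppedProcess_hittingAfter_Ioi (ξ : ℕ → Ω → ℝ) (r : ℝ) (n : ℕ) (ω : Ω) :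
    stoppedProcess ξ (hittingAfter ξ (Ioi r) 0) n ω =
      ξ (min (n : ℕ∞) (hitTimeGT ξ r ω)).toNat ω := by
  rw [← hitTimeGT_eq_hittingAfter, stoppedProcess_apply_eq_toNat]

lemma smul_indicator_le_stoppedProcess_hittingAfter {ξ : ℕ → Ω → ℝ} (hξ : ∀ n ω, 0 ≤ ξ n ω)
    (r : ℝ) (t : ℕ) :
    r • {ω | ∃ j < t, r < ξ j ω}.indicator (fun _ => (1 : ℝ)) ≤
      stoppedProcess ξ (hittingAfter ξ (Ioi r) 0) t := by
  intro ω
  rw [Pi.smul_apply, smul_eq_mul]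
  by_cases hω : ∃ j < t, r < ξ j ω
  · rw [indicator_of_mem (s := {ω | ∃ j < t, r < ξ j ω}) hω, mul_one]
    obtain ⟨j, hjt, hrj⟩ := hω
    have hτj : hittingAfter ξ (Ioi r) 0 ω ≤ j := hittingAfter_le_of_mem j.zero_le hrj
    rw [stoppedProcess_eq_of_ge (hτj.trans (WithTop.coe_le_coe.2 hjt.le))]
    exact (hittingAfter_mem_set ⟨j, j.zero_le, hrj⟩ : ξ _ ω ∈ Ioi r).le
  · rw [indicator_of_notMem (s := {ω | ∃ j < t, r < ξ j ω}) hω, mul_zero]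
    exact hξ _ ω

end HitTimeGT

theorem maximal_inequality_general
    {Ω : Type*} {m0 : MeasurableSpace Ω} (μ : Measure Ω) [IsProbabilityMeasure μ]
    (ℱ : Filtration ℕ m0) (ξ : ℕ → Ω → ℝ)
    (hadapt : Adapted ℱ ξ) (hξ : ∀ n ω, ξ n ω ∈ Set.Icc (0 : ℝ) 1)
    (r : ℝ) (hr : r ∈ Set.Ioc (0 : ℝ) 1)
    (f : ℕ → ℝ → ℝ)
    (hsuper : Supermartingale
      (fun (n : ℕ) ω => ξ ((min (n : ℕ∞) (hitTimeGT ξ r ω)).toNat) ω -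
        ∑ j ∈ Finset.range ((min (n : ℕ∞) (hitTimeGT ξ r ω)).toNat), f j (ξ j ω))
      ℱ μ) :
    ∀ t : ℕ, ∀ᵐ ω ∂μ,
      (μ[Set.indicator {ω' | ∃ j < t, r < ξ j ω'} (fun _ => (1 : ℝ)) | ℱ 0]) ω ≤
        r⁻¹ * (ξ 0 ω +
          (μ[fun ω' => ∑ j ∈ Finset.range ((min (t : ℕ∞) (hitTimeGT ξ r ω')).toNat),
              f j (ξ j ω') | ℱ 0]) ω) := by
  intro t
  have hξm (n : ℕ) : Measurable (ξ n) := (hadapt n).mono (ℱ.le n) le_rfl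
  have hξint (n : ℕ) : Integrable (ξ n) μ :=
    .of_mem_Icc 0 1 (hξm n).aemeasurable (ae_of_all _ (hξ n))
  have hA : MeasurableSet {ω | ∃ j < t, r < ξ j ω} := by
    simp only [ofPred_exists, ofPred_and]
    exact .iUnion fun j => (MeasurableSet.const _).inter (measurableSet_lt measurable_const (hξm j))
  have hbound := hsuper.condExp_le_add_condExp_sub (((integrable_const 1).indicator hA).smul r)
    (integrable_stoppedProcess (hadapt.isStoppingTime_hittingAfter measurableSet_Ioi) hξint t)
    (ae_of_all _ (smul_indicator_le_stoppedProcess_hittingAfter (fun n ω => (hξ n ω).1) r t))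
    t.zero_le
  have hsum : stoppedProcess ξ (hittingAfter ξ (Ioi r) 0) t -
      (fun ω => ξ (min (t : ℕ∞) (hitTimeGT ξ r ω)).toNat ω -
        ∑ j ∈ Finset.range (min (t : ℕ∞) (hitTimeGT ξ r ω)).toNat, f j (ξ j ω)) =
      fun ω => ∑ j ∈ Finset.range (min (t : ℕ∞) (hitTimeGT ξ r ω)).toNat, f j (ξ j ω) := by
    funext ω
    rw [Pi.sub_apply, stoppedProcess_hittingAfter_Ioi, sub_sub_cancel]
  rw [hsum] at hbound
  filter_upwards [hbound, condExp_smul r ({ω | ∃ j < t, r < ξ j ω}.indicator fun _ => (1 : ℝ))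
    (ℱ 0)] with ω hbound hsmul
  rw [le_inv_mul_iff₀ hr.1]
  simpa [hsmul] using hbound

/-- **Proposition (maximal inequality).** Let `ξ` be an `(ℱ_n)`-adapted `[0,1]`-valued
process, `τ_r = inf{n : ξ_n > r}`, and suppose for some `r ∈ (0,1]` and a locally
bounded measurable `f : ℕ × [0,1] → ℝ₊` the stopped process
`ξ_{n∧τ_r} − ∑_{j<n∧τ_r} f(j,ξ_j)` is an `(ℱ_n)`-supermartingale. Then for any `t ∈ ℕ`,
`ℙ(sup_{j<t} ξ_j > r | ℱ₀) ≤ r⁻¹ (ξ₀ + 𝔼[∑_{j<t∧τ_r} f(j,ξ_j) | ℱ₀])` a.s. -/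
theorem maximal_inequality
    {Ω : Type*} {m0 : MeasurableSpace Ω} (μ : Measure Ω) [IsProbabilityMeasure μ]
    (ℱ : Filtration ℕ m0) (ξ : ℕ → Ω → ℝ)
    (hadapt : Adapted ℱ ξ) (hξ : ∀ n ω, ξ n ω ∈ Set.Icc (0 : ℝ) 1)
    (r : ℝ) (hr : r ∈ Set.Ioc (0 : ℝ) 1)
    (f : ℕ → ℝ → ℝ) (hf_meas : ∀ j, Measurable (f j))
    (hf_nonneg : ∀ j s, 0 ≤ f j s)
    (hf_bdd : ∀ j, ∃ M : ℝ, ∀ s ∈ Set.Icc (0 : ℝ) 1, f j s ≤ M)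
    (hsuper : Supermartingale
      (fun (n : ℕ) ω => ξ ((min (n : ℕ∞) (hitTimeGT ξ r ω)).toNat) ω -
        ∑ j ∈ Finset.range ((min (n : ℕ∞) (hitTimeGT ξ r ω)).toNat), f j (ξ j ω))
      ℱ μ) :
    ∀ t : ℕ, ∀ᵐ ω ∂μ,
      (μ[Set.indicator {ω' | ∃ j < t, r < ξ j ω'} (fun _ => (1 : ℝ)) | ℱ 0]) ω ≤
        r⁻¹ * (ξ 0 ω +
          (μ[fun ω' => ∑ j ∈ Finset.range ((min (t : ℕ∞) (hitTimeGT ξ r ω')).toNat),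
              f j (ξ j ω') | ℱ 0]) ω) :=
  maximal_inequality_general μ ℱ ξ hadapt hξ r hr f hsuper
end

section
/- (Lower bound on modulated excursion sums under the L-drift condition.) Assume the standard Markov chain setup and the L-drift condition L(V,φ,Ψ) with constant ℓ₀ ∈ [1,∞). Then for every ℓ₀' ∈ [ℓ₀,∞), any measurable h : ℝ₊ → ℝ₊ that is continuous, positive and non-decreasing on [ℓ₀',∞), any q ∈ (0,1), any ℓ ∈ (ℓ₀',∞) and m ∈ (0,∞), for all x with V(x) ≥ ℓ+m and all t ≥ G_h(ℓ+m): ℙ_x( Σ_{j=0}^{S_{(ℓ)}} h(V(X_j)) ≥ t ) ≥ q·𝟙{V(x) < G_h^{-1}(t)/(1−q)²}·C_{ℓ,m}/Ψ( G_h^{-1}(t)/(1−q)² ) + q·𝟙{V(x) ≥ G_h^{-1}(t)/(1−q)²}, where C_{ℓ,m} ∈ (0,1) is the constant from part (ii) of the L-drift condition and G_h^{-1} is the inverse of G_h. -/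
open MeasureTheory ProbabilityTheory Filter Set
open scoped ENNReal NNReal

/-!
Let `u = G_h⁻¹(t)`, `R = u / (1 - q)²` and `N = ⌊t / h(u)⌋`, so that `t ≤ (N + 1) h(u)`.
While `V(X_n) ≥ u`, the drift condition makes `1 / V(X_n)` a supermartingale up to an error
`φ(1/u)` per step, and `1 / V ≥ 1 / u` at the first time `V` drops below `u`. Hence a path that
is at a level `v ≥ R` at some stopping time stays above `u` for the next `N + 1` steps with
probability at least `1 - u (1/v + N φ(1/u)) ≥ 1 - (1 - q)² - q (1 - q) = q`, using the identity
`t · u φ(1/u) = q (1 - q) h(u)` that defines `u`. Such a path collects at least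
`(N + 1) h(u) ≥ t` before `S_(ℓ)`. If `V(x) ≥ R` this is applied at time `0`; otherwise at the
first time `V` exceeds `R` before `S_(ℓ)`, which happens with probability at least
`C_{ℓ,m} / Ψ(R)`.
-/

section Paths

variable {𝒳 : Type*}

def DeterminedUpTo (n : ℕ) (C : Set (ℕ → 𝒳)) : Prop :=
  ∀ ω ω' : ℕ → 𝒳, (∀ i ≤ n, ω i = ω' i) → (ω ∈ C ↔ ω' ∈ C)

def staysIn (s : Set 𝒳) (k n : ℕ) : Set (ℕ → 𝒳) :=
  {ω | ∀ i < n, ω (k + i) ∈ s}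

def firstEntry (s b : Set 𝒳) (k : ℕ) : Set (ℕ → 𝒳) :=
  staysIn (s ∪ b)ᶜ 0 k ∩ {ω | ω k ∈ s}

theorem DeterminedUpTo.inter {m : ℕ} {C D : Set (ℕ → 𝒳)} (hC : DeterminedUpTo m C)
    (hD : DeterminedUpTo m D) : DeterminedUpTo m (C ∩ D) :=
  fun ω ω' h => and_congr (hC ω ω' h) (hD ω ω' h)

theorem DeterminedUpTo.mono {m n : ℕ} {C : Set (ℕ → 𝒳)} (hC : DeterminedUpTo m C)
    (hmn : m ≤ n) : DeterminedUpTo n C :=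
  fun ω ω' h => hC ω ω' fun i hi => h i (hi.trans hmn)

theorem determinedUpTo_setOf_apply_mem (s : Set 𝒳) (n : ℕ) :
    DeterminedUpTo n {ω : ℕ → 𝒳 | ω n ∈ s} :=
  fun ω ω' h => by simp only [mem_ofPred_eq, h n le_rfl]

theorem determinedUpTo_staysIn (s : Set 𝒳) {k n m : ℕ} (h : k + n ≤ m + 1) :
    DeterminedUpTo m (staysIn s k n) := fun ω ω' hωω' =>
  forall₂_congr fun i hi => by rw [hωω' (k + i) (by omega)]

theorem staysIn_zero (s : Set 𝒳) (k : ℕ) : staysIn s k 0 = univ := by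
  simp [staysIn]

theorem staysIn_succ (s : Set 𝒳) (k n : ℕ) :
    staysIn s k (n + 1) = staysIn s k n ∩ {ω | ω (k + n) ∈ s} := by
  ext ω
  simp only [staysIn, mem_ofPred_eq, mem_inter_iff, Nat.lt_succ_iff_lt_or_eq, or_imp,
    forall_and, forall_eq]

theorem staysIn_mono {s t : Set 𝒳} (hst : s ⊆ t) (k n : ℕ) : staysIn s k n ⊆ staysIn t k n :=
  fun _ hω i hi => hst (hω i hi)

theorem firstEntry_subset_staysIn_compl (s b : Set 𝒳) (k : ℕ) :
    firstEntry s b k ⊆ staysIn bᶜ 0 k :=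
  fun _ hω i hi => fun hb => hω.1 i hi (Or.inr hb)

theorem le_hitTime_iff {s : Set 𝒳} {ω : ℕ → 𝒳} {n : ℕ} :
    (n : ℕ∞) ≤ hitTime s ω ↔ ∀ j < n, ω j ∉ s := by
  simp only [hitTime, le_iInf_iff, Nat.cast_le]
  exact forall_congr' fun j => ⟨fun H hj hm => (H hm).not_gt hj, fun H hm => not_lt.1 (H · hm)⟩

theorem hitTime_le {s : Set 𝒳} {ω : ℕ → 𝒳} {j : ℕ} (h : ω j ∈ s) : hitTime s ω ≤ j :=
  iInf₂_le j h

theorem setOf_hitTime_lt_subset_iUnion_firstEntry (s b : Set 𝒳) :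
    {ω | hitTime s ω < hitTime b ω} ⊆ ⋃ k, firstEntry s b k := by
  classical
  intro ω hω
  have hex : ∃ k, ω k ∈ s := by
    by_contra! hno
    have : hitTime s ω = ⊤ := top_unique (le_iInf₂ fun n hn => absurd hn (hno n))
    exact not_top_lt (this ▸ hω : ⊤ < hitTime b ω)
  have hs_le : (Nat.find hex : ℕ∞) ≤ hitTime s ω :=
    le_hitTime_iff.2 fun j hj => Nat.find_min hex hj
  refine mem_iUnion.2 ⟨Nat.find hex, fun j hj => ?_, Nat.find_spec hex⟩
  rw [zero_add]
  refine not_or.2 ⟨Nat.find_min hex hj, fun hjb => ?_⟩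
  exact (lt_of_lt_of_le hω ((hitTime_le hjb).trans (Nat.cast_le.2 hj.le))).not_ge hs_le

theorem pairwise_disjoint_firstEntry (s b : Set 𝒳) :
    Pairwise (Function.onFun Disjoint (firstEntry s b)) := by
  refine pairwise_disjoint_on _ |>.2 fun a c hac => disjoint_left.2 fun ω ha hc => ?_
  exact hc.1 a (by simpa using hac) (Or.inl ((zero_add a).symm ▸ ha.2))

theorem determinedUpTo_firstEntry (s b : Set 𝒳) (k : ℕ) : DeterminedUpTo k (firstEntry s b k) :=
  (determinedUpTo_staysIn _ (by omega)).inter (determinedUpTo_setOf_apply_mem s k)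

variable [MeasurableSpace 𝒳]

theorem measurableSet_staysIn {s : Set 𝒳} (hs : MeasurableSet s) (k n : ℕ) :
    MeasurableSet (staysIn s k n) := by
  induction n with
  | zero => simp [staysIn_zero]
  | succ n ih => exact staysIn_succ s k n ▸ ih.inter (measurable_pi_apply _ hs)

theorem measurableSet_firstEntry {s b : Set 𝒳} (hs : MeasurableSet s) (hb : MeasurableSet b)
    (k : ℕ) : MeasurableSet (firstEntry s b k) :=
  (measurableSet_staysIn (hs.union hb).compl 0 k).inter (measurable_pi_apply k hs)

end Paths

theorem mul_measure_hitTime_lt_le {𝒳 : Type*} [MeasurableSpace 𝒳] {μ : Measure (ℕ → 𝒳)}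
    {s b : Set 𝒳} (hs : MeasurableSet s) (hb : MeasurableSet b) {A : ℕ → Set (ℕ → 𝒳)}
    (hA : ∀ k, MeasurableSet (A k)) {p : ℝ≥0∞}
    (hpA : ∀ k, p * μ (firstEntry s b k) ≤ μ (firstEntry s b k ∩ A k)) :
    p * μ {ω | hitTime s ω < hitTime b ω} ≤ μ (⋃ k, firstEntry s b k ∩ A k) :=
  calc p * μ {ω | hitTime s ω < hitTime b ω}
      ≤ p * ∑' k, μ (firstEntry s b k) := by
        gcongr
        exact (measure_mono (setOf_hitTime_lt_subset_iUnion_firstEntry s b)).trans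
          (measure_iUnion_le _)
    _ ≤ ∑' k, μ (firstEntry s b k ∩ A k) := by
        rw [← ENNReal.tsum_mul_left]
        exact ENNReal.tsum_le_tsum hpA
    _ = μ (⋃ k, firstEntry s b k ∩ A k) :=
        (measure_iUnion (fun i j hij => ((pairwise_disjoint_firstEntry s b) hij).mono
          inter_subset_left inter_subset_left)
          fun k => (measurableSet_firstEntry hs hb k).inter (hA k)).symm

section ModSum

variable {𝒳 : Type*} {h : ℝ → ℝ} {V : 𝒳 → ℝ}

theorem sum_range_le_modSum {T : (ℕ → 𝒳) → ℕ∞} {ω : ℕ → 𝒳} {k n : ℕ}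
    (hT : ((k + n : ℕ) : ℕ∞) ≤ T ω) :
    ∑ i ∈ Finset.range n, ENNReal.ofReal (h (V (ω (k + i)))) ≤ modSum h V T ω := by
  classical
  calc ∑ i ∈ Finset.range n, ENNReal.ofReal (h (V (ω (k + i))))
      = ∑ j ∈ Finset.Ico k (k + n),
          if (j : ℕ∞) ≤ T ω then ENNReal.ofReal (h (V (ω j))) else 0 := by
        rw [Finset.sum_Ico_eq_sum_range, Nat.add_sub_cancel_left]
        refine Finset.sum_congr rfl fun i hi => (if_pos ?_).symm
        exact le_trans (Nat.cast_le.2 (by have := Finset.mem_range.1 hi; omega)) hT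
    _ ≤ modSum h V T ω := ENNReal.sum_le_tsum _

theorem ofReal_le_modSum_hitTime {ℓ u t : ℝ} {k n : ℕ} {ω : ℕ → 𝒳}
    (hmono : MonotoneOn h (Ici u)) (hℓu : ℓ ≤ u) (ht : t ≤ n * h u)
    (hω : ω ∈ staysIn {y | V y < ℓ}ᶜ 0 k ∩ staysIn {y | u ≤ V y} k n) :
    ENNReal.ofReal t ≤ modSum h V (hitTime {y | V y < ℓ}) ω := by
  have hT : ((k + n : ℕ) : ℕ∞) ≤ hitTime {y | V y < ℓ} ω := by
    refine le_hitTime_iff.2 fun j hj => ?_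
    rcases lt_or_ge j k with hjk | hjk
    · simpa using hω.1 j hjk
    · obtain ⟨i, rfl⟩ := Nat.exists_eq_add_of_le hjk
      exact not_lt.2 (hℓu.trans (hω.2 i (by omega)))
  calc ENNReal.ofReal t
      ≤ ∑ _i ∈ Finset.range n, ENNReal.ofReal (h u) := by
        rw [Finset.sum_const, Finset.card_range, nsmul_eq_mul, ← ENNReal.ofReal_natCast,
          ← ENNReal.ofReal_mul (Nat.cast_nonneg n)]
        exact ENNReal.ofReal_le_ofReal ht
    _ ≤ ∑ i ∈ Finset.range n, ENNReal.ofReal (h (V (ω (k + i)))) := by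
        refine Finset.sum_le_sum fun i hi => ENNReal.ofReal_le_ofReal ?_
        have hui : u ≤ V (ω (k + i)) := hω.2 i (Finset.mem_range.1 hi)
        exact hmono self_mem_Ici hui hui
    _ ≤ modSum h V (hitTime {y | V y < ℓ}) ω := sum_range_le_modSum hT

end ModSum

namespace MarkovChain

variable {𝒳 : Type*} [MeasurableSpace 𝒳] (mc : MarkovChain 𝒳) (x : 𝒳)

theorem setLIntegral_apply_succ {n : ℕ} {C : Set (ℕ → 𝒳)} (hC : MeasurableSet C)
    (hCdet : DeterminedUpTo n C) {g : 𝒳 → ℝ≥0∞} (hg : Measurable g) :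
    ∫⁻ ω in C, g (ω (n + 1)) ∂mc.law x = ∫⁻ ω in C, ∫⁻ y, g y ∂mc.P (ω n) ∂mc.law x := by
  have hP : Measurable fun ω : ℕ → 𝒳 => mc.P (ω n) := mc.P.measurable.comp (measurable_pi_apply n)
  have hmap : ((mc.law x).restrict C).map (fun ω => ω (n + 1))
      = ((mc.law x).restrict C).bind fun ω => mc.P (ω n) := by
    ext A hA
    rw [Measure.map_apply (measurable_pi_apply _) hA, Measure.bind_apply hA hP.aemeasurable,
      Measure.restrict_apply (measurable_pi_apply _ hA), inter_comm]
    exact mc.law_markov x n C A hC hA hCdet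
  rw [← lintegral_map hg (measurable_pi_apply _), hmap,
    Measure.lintegral_bind hP.aemeasurable hg.aemeasurable]

theorem mul_measure_diff_staysIn_le {s : Set 𝒳} (hs : MeasurableSet s) {f : 𝒳 → ℝ≥0∞}
    (hf : Measurable f) {a c ε : ℝ≥0∞} (hdrift : ∀ z ∈ s, ∫⁻ y, f y ∂mc.P z ≤ f z + ε)
    (hout : ∀ z ∉ s, a ≤ f z) {k : ℕ} {C : Set (ℕ → 𝒳)} (hC : MeasurableSet C)
    (hCdet : DeterminedUpTo k C) (hCf : ∀ ω ∈ C, f (ω k) ≤ c) (n : ℕ) :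
    a * mc.law x (C \ staysIn s k (n + 1)) ≤ (c + n * ε) * mc.law x C := by
  set μ := mc.law x
  set S := staysIn s k
  have hSm : ∀ n, MeasurableSet (S n) := measurableSet_staysIn hs k
  have hfm : ∀ i, Measurable fun ω : ℕ → 𝒳 => f (ω i) := fun i => hf.comp (measurable_pi_apply i)
  -- Paths of `C ∩ S n` that leave `s` at time `k + n` pay at least `a` in the integral.
  have hsplit : ∀ n, a * μ (C \ S (n + 1)) + ∫⁻ ω in C ∩ S (n + 1), f (ω (k + n)) ∂μ
      ≤ a * μ (C \ S n) + ∫⁻ ω in C ∩ S n, f (ω (k + n)) ∂μ := by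
    intro n
    set D := C ∩ S n ∩ {ω | ω (k + n) ∉ s}
    have hDm : MeasurableSet D := (hC.inter (hSm n)).inter (measurable_pi_apply (k + n) hs).compl
    have hdiff : C \ S (n + 1) = C \ S n ∪ D := by
      ext ω; simp only [S, D, staysIn_succ, Set.mem_sdiff, mem_inter_iff, mem_union, mem_ofPred_eq]
      tauto
    have hinter : C ∩ S n = C ∩ S (n + 1) ∪ D := by
      ext ω; simp only [S, D, staysIn_succ, mem_inter_iff, mem_union, mem_ofPred_eq]
      tauto
    have hD : a * μ D ≤ ∫⁻ ω in D, f (ω (k + n)) ∂μ := by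
      rw [← setLIntegral_const]
      exact setLIntegral_mono (hfm _) fun ω hω => hout _ hω.2
    have hdisj₁ : Disjoint (C \ S n) D := disjoint_sdiff_left.mono_right fun _ h => h.1.2
    have hdisj₂ : Disjoint (C ∩ S (n + 1)) D := disjoint_left.2 fun _ h1 h2 =>
      h2.2 (h1.2 n n.lt_succ_self)
    rw [hdiff, hinter, measure_union hdisj₁ hDm, lintegral_union hDm hdisj₂, mul_add]
    calc a * μ (C \ S n) + a * μ D + ∫⁻ ω in C ∩ S (n + 1), f (ω (k + n)) ∂μ
        ≤ a * μ (C \ S n) + ∫⁻ ω in D, f (ω (k + n)) ∂μ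
          + ∫⁻ ω in C ∩ S (n + 1), f (ω (k + n)) ∂μ := by gcongr
      _ = _ := by ring
  have hstep : ∀ n, ∫⁻ ω in C ∩ S (n + 1), f (ω (k + n + 1)) ∂μ
      ≤ ∫⁻ ω in C ∩ S (n + 1), f (ω (k + n)) ∂μ + ε * μ C := by
    intro n
    have hdet : DeterminedUpTo (k + n) (C ∩ S (n + 1)) :=
      (hCdet.mono (by omega)).inter (determinedUpTo_staysIn s le_rfl)
    rw [mc.setLIntegral_apply_succ x (hC.inter (hSm _)) hdet hf]
    calc ∫⁻ ω in C ∩ S (n + 1), ∫⁻ y, f y ∂mc.P (ω (k + n)) ∂μ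
        ≤ ∫⁻ ω in C ∩ S (n + 1), (f (ω (k + n)) + ε) ∂μ :=
          setLIntegral_mono ((hfm _).add measurable_const) fun ω hω =>
            hdrift _ (hω.2 n n.lt_succ_self)
      _ ≤ ∫⁻ ω in C ∩ S (n + 1), f (ω (k + n)) ∂μ + ε * μ C := by
          rw [lintegral_add_right _ measurable_const, setLIntegral_const]
          gcongr
          exact inter_subset_left
  have hinv : ∀ n, a * μ (C \ S (n + 1)) + ∫⁻ ω in C ∩ S (n + 1), f (ω (k + n)) ∂μ
      ≤ (c + n * ε) * μ C := by
    intro n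
    induction n with
    | zero =>
      refine (hsplit 0).trans ?_
      simp only [S, staysIn_zero, sdiff_univ, measure_empty, mul_zero, inter_univ, zero_add,
        add_zero, Nat.cast_zero, zero_mul]
      rw [← setLIntegral_const]
      exact setLIntegral_mono measurable_const hCf
    | succ n ih =>
      calc _ ≤ a * μ (C \ S (n + 1)) + ∫⁻ ω in C ∩ S (n + 1), f (ω (k + (n + 1))) ∂μ :=
            hsplit (n + 1)
        _ ≤ a * μ (C \ S (n + 1)) + (∫⁻ ω in C ∩ S (n + 1), f (ω (k + n)) ∂μ + ε * μ C) := by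
            gcongr; exact hstep n
        _ ≤ (c + n * ε) * μ C + ε * μ C := by rw [← add_assoc]; gcongr
        _ = (c + (n + 1 : ℕ) * ε) * μ C := by push_cast; ring
  exact le_self_add.trans (hinv n)

end MarkovChain

theorem pos_of_strictAntiOn_of_tendsto_zero {g : ℝ → ℝ} {a r : ℝ} (hg : StrictAntiOn g (Ici a))
    (hlim : Tendsto g atTop (nhds 0)) (hr : a ≤ r) : 0 < g r := by
  have hr₁ : a ≤ r + 1 := by linarith
  have hnonneg : 0 ≤ g (r + 1) := le_of_tendsto hlim <| eventually_atTop.2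
    ⟨r + 1, fun s hs => hg.antitoneOn hr₁ (hr₁.trans hs) hs⟩
  exact hnonneg.trans_lt (hg hr hr₁ (lt_add_one r))

theorem mul_inv_add_floor_Gfun_div_mul_le {q : ℝ} (hq : q ∈ Ioo 0 1) {φ h : ℝ → ℝ} {u v : ℝ}
    (hu : 0 < u) (hφu : 0 < u * φ (1 / u)) (hhu : 0 < h u) (hv : u / (1 - q) ^ 2 ≤ v) :
    u * (v⁻¹ + ⌊Gfun q φ h u / h u⌋₊ * φ (1 / u)) ≤ 1 - q := by
  obtain ⟨hq0, hq1⟩ := hq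
  have hq2 : 0 < (1 - q) ^ 2 := by nlinarith
  have hvpos : 0 < v := (div_pos hu hq2).trans_le hv
  have h₁ : u * v⁻¹ ≤ (1 - q) ^ 2 := by
    rw [← div_eq_mul_inv, div_le_iff₀ hvpos]
    rwa [div_le_iff₀ hq2, mul_comm] at hv
  -- `Gfun q φ h u` is defined so that this term is exactly `q (1 - q)`.
  have h₂ : ⌊Gfun q φ h u / h u⌋₊ * (u * φ (1 / u)) ≤ q * (1 - q) :=
    calc _ ≤ Gfun q φ h u / h u * (u * φ (1 / u)) :=
          mul_le_mul_of_nonneg_right (Nat.floor_le (by unfold Gfun; positivity)) hφu.le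
      _ = q * (1 - q) := by
          have : φ (1 / u) ≠ 0 := fun h0 => by rw [h0, mul_zero] at hφu; exact hφu.false
          unfold Gfun; field_simp
  calc u * (v⁻¹ + ⌊Gfun q φ h u / h u⌋₊ * φ (1 / u))
      = u * v⁻¹ + ⌊Gfun q φ h u / h u⌋₊ * (u * φ (1 / u)) := by ring
    _ ≤ (1 - q) ^ 2 + q * (1 - q) := add_le_add h₁ h₂
    _ = 1 - q := by ring

namespace LDrift

variable {𝒳 : Type*} [TopologicalSpace 𝒳] [MeasurableSpace 𝒳] {mc : MarkovChain 𝒳}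
  {V : 𝒳 → ℝ} {φ Ψ : ℝ → ℝ} (ld : LDrift mc V φ Ψ)
include ld

theorem mul_phi_pos {r : ℝ} (hr : 1 ≤ r) : 0 < r * φ (1 / r) :=
  pos_of_strictAntiOn_of_tendsto_zero (g := fun r => r * φ (1 / r)) ld.rφ_anti ld.rφ_lim hr

theorem phi_nonneg {r : ℝ} (hr : 1 ≤ r) : 0 ≤ φ (1 / r) :=
  ld.φ_nonneg _ ⟨by positivity, (div_le_one (by linarith)).2 hr⟩

theorem phi_one_div_le {u v : ℝ} (hu : 1 ≤ u) (huv : u ≤ v) : φ (1 / v) ≤ φ (1 / u) := by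
  have hupos : 0 < u := by linarith
  have hvpos : 0 < v := by linarith
  calc φ (1 / v) = v * φ (1 / v) / v := by field_simp
    _ ≤ u * φ (1 / u) / v :=
        div_le_div_of_nonneg_right (ld.rφ_anti.antitoneOn hu (hu.trans huv) huv) hvpos.le
    _ ≤ u * φ (1 / u) / u := div_le_div_of_nonneg_left (ld.mul_phi_pos hu).le hupos huv
    _ = φ (1 / u) := by field_simp

theorem continuousOn_Gfun (q : ℝ) {h : ℝ → ℝ} {a : ℝ} (ha : 1 ≤ a)
    (hcont : ContinuousOn h (Ici a)) : ContinuousOn (Gfun q φ h) (Ici a) := by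
  have hpos : ∀ r ∈ Ici a, 0 < r := fun r hr => by linarith [mem_Ici.1 hr]
  have hinv : ContinuousOn (fun r : ℝ => 1 / r) (Ici a) :=
    continuousOn_const.div continuousOn_id fun r hr => (hpos r hr).ne'
  have hφ : ContinuousOn (fun r : ℝ => φ (1 / r)) (Ici a) :=
    ld.φ_cont.comp hinv fun r hr =>
      ⟨by have := hpos r hr; positivity, (div_le_one (hpos r hr)).2 (ha.trans hr)⟩
  exact (continuousOn_const.mul hcont).div (continuousOn_id.mul hφ) fun r hr =>
    (ld.mul_phi_pos (ha.trans hr)).ne'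

theorem exists_ge_Gfun_eq {q : ℝ} (hq : q ∈ Ioo 0 1) {h : ℝ → ℝ} {a t : ℝ} (ha : 1 ≤ a)
    (hcont : ContinuousOn h (Ici a)) (hmono : MonotoneOn h (Ici a)) (hpos : 0 < h a)
    (ht : Gfun q φ h a ≤ t) : ∃ r, a ≤ r ∧ Gfun q φ h r = t := by
  obtain ⟨hq0, hq1⟩ := hq
  have hden : Tendsto (fun r => r * φ (1 / r)) atTop (nhdsWithin 0 (Ioi 0)) :=
    tendsto_nhdsWithin_iff.2
      ⟨ld.rφ_lim, (eventually_ge_atTop 1).mono fun r hr => ld.mul_phi_pos hr⟩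
  have hlarge : ∀ᶠ r in atTop, t ≤ Gfun q φ h r := by
    have hc : 0 < q * (1 - q) * h a := mul_pos (mul_pos hq0 (by linarith)) hpos
    filter_upwards [(hden.inv_tendsto_nhdsGT_zero.const_mul_atTop hc).eventually_ge_atTop t,
      eventually_ge_atTop a] with r hr hra
    refine hr.trans ?_
    change q * (1 - q) * h a * (r * φ (1 / r))⁻¹ ≤ _
    rw [← div_eq_mul_inv]
    unfold Gfun
    gcongr
    · exact (ld.mul_phi_pos (ha.trans hra)).le
    · exact hmono self_mem_Ici hra hra
  obtain ⟨b, hb, hab⟩ := (hlarge.and (eventually_ge_atTop a)).exists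
  obtain ⟨r, hr, hrt⟩ := intermediate_value_Icc hab
    ((ld.continuousOn_Gfun q ha hcont).mono Icc_subset_Ici_self) ⟨ht, hb⟩
  exact ⟨r, hr.1, hrt⟩

variable [OpensMeasurableSpace 𝒳] (x : 𝒳)

theorem lintegral_ofReal_inv_le {u : ℝ} (hu : 1 ≤ u) {z : 𝒳} (hz : u ≤ V z) :
    ∫⁻ y, ENNReal.ofReal (V y)⁻¹ ∂mc.P z
      ≤ ENNReal.ofReal (V z)⁻¹ + ENNReal.ofReal (φ (1 / u)) := by
  have := mc.isMarkov
  have hinv_mem : ∀ y, (V y)⁻¹ ∈ Icc (0 : ℝ) 1 := fun y =>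
    ⟨inv_nonneg.2 (by linarith [ld.V_one_le y]), inv_le_one_of_one_le₀ (ld.V_one_le y)⟩
  have hint : Integrable (fun y => (V y)⁻¹) (mc.P z) :=
    (integrable_const (1 : ℝ)).mono' ld.V_cont.measurable.inv.aestronglyMeasurable
      (ae_of_all _ fun y => by rw [Real.norm_of_nonneg (hinv_mem y).1]; exact (hinv_mem y).2)
  have hdrift : ∫ y, (V y)⁻¹ ∂mc.P z ≤ (V z)⁻¹ + φ (1 / V z) := by
    have := ld.drift z
    have : 0 ≤ if V z ≤ ld.ℓ₀ then ld.b else 0 := by split_ifs <;> simp [ld.b_nonneg]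
    rw [one_div]
    linarith
  rw [← ofReal_integral_eq_lintegral_ofReal hint (ae_of_all _ fun y => (hinv_mem y).1),
    ← ENNReal.ofReal_add (hinv_mem z).1 (ld.phi_nonneg hu)]
  exact ENNReal.ofReal_le_ofReal (hdrift.trans (by gcongr; exact ld.phi_one_div_le hu hz))

theorem ofReal_mul_measure_le_measure_inter_staysIn {u v q : ℝ} (hu : 1 ≤ u) (huv : u ≤ v)
    (hq : 0 ≤ q) {N : ℕ} (hbudget : u * (v⁻¹ + N * φ (1 / u)) ≤ 1 - q) {k : ℕ}
    {C : Set (ℕ → 𝒳)} (hC : MeasurableSet C) (hCdet : DeterminedUpTo k C)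
    (hCv : ∀ ω ∈ C, v ≤ V (ω k)) :
    ENNReal.ofReal q * mc.law x C ≤ mc.law x (C ∩ staysIn {y | u ≤ V y} k (N + 1)) := by
  have := mc.law_prob x
  set μ := mc.law x
  have hupos : 0 < u := by linarith
  have hvpos : 0 < v := by linarith
  have hVm : Measurable V := ld.V_cont.measurable
  have hs : MeasurableSet {y | u ≤ V y} := measurableSet_le measurable_const hVm
  have hφ := ld.phi_nonneg hu
  have hexit := mc.mul_measure_diff_staysIn_le x (a := ENNReal.ofReal u⁻¹)
    (c := ENNReal.ofReal v⁻¹) hs (ENNReal.measurable_ofReal.comp hVm.inv)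
    (fun z hz => ld.lintegral_ofReal_inv_le hu hz)
    (fun z hz => ENNReal.ofReal_le_ofReal
      (inv_anti₀ (by linarith [ld.V_one_le z]) (not_le.1 hz).le))
    hC hCdet (fun ω hω => ENNReal.ofReal_le_ofReal (inv_anti₀ hvpos (hCv ω hω))) N
  set S := staysIn {y | u ≤ V y} k (N + 1)
  have hdrift_nonneg : 0 ≤ v⁻¹ + N * φ (1 / u) :=
    add_nonneg (inv_nonneg.2 hvpos.le) (mul_nonneg (Nat.cast_nonneg _) hφ)
  have hdiff : μ (C \ S) ≤ ENNReal.ofReal (1 - q) * μ C :=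
    calc μ (C \ S) = ENNReal.ofReal u * (ENNReal.ofReal u⁻¹ * μ (C \ S)) := by
          rw [← mul_assoc, ← ENNReal.ofReal_mul hupos.le, mul_inv_cancel₀ hupos.ne',
            ENNReal.ofReal_one, one_mul]
      _ ≤ ENNReal.ofReal u * ((ENNReal.ofReal v⁻¹ + N * ENNReal.ofReal (φ (1 / u))) * μ C) := by
          gcongr
      _ = ENNReal.ofReal (u * (v⁻¹ + N * φ (1 / u))) * μ C := by
          rw [ENNReal.ofReal_mul hupos.le, ENNReal.ofReal_add (inv_nonneg.2 hvpos.le)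
            (mul_nonneg (Nat.cast_nonneg _) hφ), ENNReal.ofReal_mul (Nat.cast_nonneg _),
            ENNReal.ofReal_natCast, mul_assoc]
      _ ≤ ENNReal.ofReal (1 - q) * μ C := by gcongr
  have hsplit : ENNReal.ofReal q * μ C + ENNReal.ofReal (1 - q) * μ C = μ C := by
    rw [← add_mul, ← ENNReal.ofReal_add hq ((mul_nonneg hupos.le hdrift_nonneg).trans hbudget),
      add_sub_cancel, ENNReal.ofReal_one, one_mul]
  refine ENNReal.le_of_add_le_add_right (a := ENNReal.ofReal (1 - q) * μ C) (by finiteness) ?_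
  calc _ = μ C := hsplit
    _ = μ (C ∩ S) + μ (C \ S) := (measure_inter_add_sdiff C (measurableSet_staysIn hs k _)).symm
    _ ≤ μ (C ∩ S) + ENNReal.ofReal (1 - q) * μ C := by gcongr

theorem ofReal_le_measure_staysIn {u v q : ℝ} (hu : 1 ≤ u) (huv : u ≤ v) (hq : 0 ≤ q) {N : ℕ}
    (hbudget : u * (v⁻¹ + N * φ (1 / u)) ≤ 1 - q) (hvx : v ≤ V x) :
    ENNReal.ofReal q ≤ mc.law x (staysIn {y | u ≤ V y} 0 (N + 1)) := by
  have := mc.law_prob x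
  set C := {ω : ℕ → 𝒳 | ω 0 ∈ {y | V x ≤ V y}}
  have hC : MeasurableSet C :=
    measurable_pi_apply 0 (measurableSet_le measurable_const ld.V_cont.measurable)
  have hC1 : mc.law x C = 1 := prob_le_one.antisymm <| (mc.law_start x).symm.trans_le <|
    measure_mono fun ω (hω : ω 0 = x) => show V x ≤ V (ω 0) by rw [hω]
  calc ENNReal.ofReal q = ENNReal.ofReal q * mc.law x C := by rw [hC1, mul_one]
    _ ≤ mc.law x (C ∩ staysIn {y | u ≤ V y} 0 (N + 1)) :=
        ld.ofReal_mul_measure_le_measure_inter_staysIn x hu huv hq hbudget hC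
          (determinedUpTo_setOf_apply_mem _ 0) fun ω hω => hvx.trans hω
    _ ≤ mc.law x (staysIn {y | u ≤ V y} 0 (N + 1)) := measure_mono inter_subset_right

theorem ofReal_mul_le_measure_iUnion_firstEntry {ℓ m R u q : ℝ} (hℓ : ld.ℓ₀ < ℓ) (hm : 0 < m)
    (hR : ℓ + m < R) (hx : ℓ + m ≤ V x) (hu : 1 ≤ u) (huR : u ≤ R) (hq : 0 ≤ q) {N : ℕ}
    (hbudget : u * (R⁻¹ + N * φ (1 / u)) ≤ 1 - q) :
    ENNReal.ofReal (q * (ld.Cconst ℓ m / Ψ R)) ≤ mc.law x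
      (⋃ k, firstEntry {y | R < V y} {y | V y < ℓ} k ∩ staysIn {y | u ≤ V y} k (N + 1)) := by
  have hVm : Measurable V := ld.V_cont.measurable
  calc ENNReal.ofReal (q * (ld.Cconst ℓ m / Ψ R))
      = ENNReal.ofReal q * ENNReal.ofReal (ld.Cconst ℓ m / Ψ R) := ENNReal.ofReal_mul hq
    _ ≤ ENNReal.ofReal q *
        mc.law x {ω | hitTime {y | R < V y} ω < hitTime {y | V y < ℓ} ω} := by
        gcongr
        exact ld.hit_lb ℓ m hℓ hm R hR x hx
    _ ≤ _ := mul_measure_hitTime_lt_le (measurableSet_lt measurable_const hVm)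
        (measurableSet_lt hVm measurable_const)
        (fun k => measurableSet_staysIn (measurableSet_le measurable_const hVm) k _) fun k =>
          ld.ofReal_mul_measure_le_measure_inter_staysIn x hu huR hq hbudget
            (measurableSet_firstEntry (measurableSet_lt measurable_const hVm)
              (measurableSet_lt hVm measurable_const) k)
            (determinedUpTo_firstEntry _ _ k) fun ω hω => le_of_lt hω.2

end LDrift

theorem modulated_excursion_sum_lower_bound_general
    {𝒳 : Type*} [TopologicalSpace 𝒳]
    [MeasurableSpace 𝒳] [BorelSpace 𝒳]
    (mc : MarkovChain 𝒳)
    (V : 𝒳 → ℝ) (φ Ψ : ℝ → ℝ) (ld : LDrift mc V φ Ψ)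
    (ℓ₀' : ℝ) (hℓ₀' : ld.ℓ₀ ≤ ℓ₀')
    (h : ℝ → ℝ)
    (h_pos : ∀ r, ℓ₀' ≤ r → 0 < h r)
    (h_cont : ContinuousOn h (Set.Ici ℓ₀'))
    (h_mono : MonotoneOn h (Set.Ici ℓ₀'))
    (q : ℝ) (hq : q ∈ Set.Ioo (0 : ℝ) 1)
    (Ginv : ℝ → ℝ)
    (hGinv_left : ∀ r, ℓ₀' ≤ r → Ginv (Gfun q φ h r) = r) :
    ∀ ℓ, ℓ₀' < ℓ → ∀ m : ℝ, 0 < m → ∀ x : 𝒳, ℓ + m ≤ V x →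
      ∀ t : ℝ, Gfun q φ h (ℓ + m) ≤ t →
        ENNReal.ofReal (q * (if V x < Ginv t / (1 - q) ^ 2
            then ld.Cconst ℓ m / Ψ (Ginv t / (1 - q) ^ 2) else 1)) ≤
          mc.law x {ω | ENNReal.ofReal t ≤
            modSum h V (hitTime {y | V y < ℓ}) ω} := by
  intro ℓ hℓ m hm x hx t ht
  have hℓm : ℓ₀' ≤ ℓ + m := by linarith
  have hIci : Ici (ℓ + m) ⊆ Ici ℓ₀' := Ici_subset_Ici.2 hℓm
  obtain ⟨u, hu, rfl⟩ := ld.exists_ge_Gfun_eq hq (by linarith [ld.one_le_ℓ₀])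
    (h_cont.mono hIci) (h_mono.mono hIci) (h_pos _ hℓm) ht
  rw [hGinv_left u (hℓm.trans hu)]
  have hu₁ : 1 ≤ u := by linarith [ld.one_le_ℓ₀]
  have hhu : 0 < h u := h_pos u (hℓm.trans hu)
  have hR : u < u / (1 - q) ^ 2 := by
    obtain ⟨hq0, hq1⟩ := hq
    exact (lt_div_iff₀ (by positivity)).2
      (mul_lt_of_lt_one_right (by linarith) (pow_lt_one₀ (by linarith) (by linarith) two_ne_zero))
  have hbudget := fun v => mul_inv_add_floor_Gfun_div_mul_le (v := v) hq (by linarith)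
    (ld.mul_phi_pos hu₁) hhu
  have hgood : ∀ k,
      staysIn {y | V y < ℓ}ᶜ 0 k ∩ staysIn {y | u ≤ V y} k (⌊Gfun q φ h u / h u⌋₊ + 1)
      ⊆ {ω | ENNReal.ofReal (Gfun q φ h u) ≤ modSum h V (hitTime {y | V y < ℓ}) ω} :=
    fun k ω hω => ofReal_le_modSum_hitTime (h_mono.mono (Ici_subset_Ici.2 (hℓm.trans hu)))
      (by linarith) (by push_cast; exact ((div_lt_iff₀ hhu).1 (Nat.lt_floor_add_one _)).le) hω
  split_ifs with hxR
  · refine (ld.ofReal_mul_le_measure_iUnion_firstEntry x (hℓ₀'.trans_lt hℓ) hm (by linarith) hx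
      hu₁ hR.le hq.1.le (hbudget _ le_rfl)).trans (measure_mono (iUnion_subset fun k => ?_))
    exact fun ω hω => hgood k ⟨firstEntry_subset_staysIn_compl _ _ k hω.1, hω.2⟩
  · rw [mul_one]
    refine (ld.ofReal_le_measure_staysIn x hu₁ hR.le hq.1.le (hbudget _ le_rfl)
      (not_lt.1 hxR)).trans (measure_mono fun ω hω => hgood 0 ⟨by simp [staysIn_zero], hω⟩)

/-- **Proposition (lower bound on modulated excursion sums under the L-drift condition).**
Under the standard setup and the L-drift condition with constant `ℓ₀`: for every
`ℓ₀' ≥ ℓ₀`, any measurable `h : ℝ₊ → ℝ₊` continuous, positive and non-decreasing on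
`[ℓ₀',∞)`, any `q ∈ (0,1)`, `ℓ ∈ (ℓ₀',∞)`, `m > 0`, all `x ∈ {V ≥ ℓ+m}` and all
`t ≥ G_h(ℓ+m)`:
`ℙ_x(∑_{j=0}^{S_{(ℓ)}} h(V(X_j)) ≥ t) ≥
  q 𝟙{V(x) < G_h⁻¹(t)/(1-q)²} C_{ℓ,m}/Ψ(G_h⁻¹(t)/(1-q)²) + q 𝟙{V(x) ≥ G_h⁻¹(t)/(1-q)²}`. -/
theorem modulated_excursion_sum_lower_bound
    {𝒳 : Type*} [TopologicalSpace 𝒳] [LocallyCompactSpace 𝒳]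
    [MeasurableSpace 𝒳] [BorelSpace 𝒳]
    (mc : MarkovChain 𝒳) (setup : StdSetup mc)
    (V : 𝒳 → ℝ) (φ Ψ : ℝ → ℝ) (ld : LDrift mc V φ Ψ)
    (ℓ₀' : ℝ) (hℓ₀' : ld.ℓ₀ ≤ ℓ₀')
    (h : ℝ → ℝ) (h_meas : Measurable h) (h_nonneg : ∀ r, 0 ≤ h r)
    (h_pos : ∀ r, ℓ₀' ≤ r → 0 < h r)
    (h_cont : ContinuousOn h (Set.Ici ℓ₀'))
    (h_mono : MonotoneOn h (Set.Ici ℓ₀'))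
    (q : ℝ) (hq : q ∈ Set.Ioo (0 : ℝ) 1)
    (Ginv : ℝ → ℝ)
    (hGinv_left : ∀ r, ℓ₀' ≤ r → Ginv (Gfun q φ h r) = r)
    (hGinv_right : ∀ t, Gfun q φ h ℓ₀' ≤ t → Gfun q φ h (Ginv t) = t ∧ 0 ≤ Ginv t) :
    ∀ ℓ, ℓ₀' < ℓ → ∀ m : ℝ, 0 < m → ∀ x : 𝒳, ℓ + m ≤ V x →
      ∀ t : ℝ, Gfun q φ h (ℓ + m) ≤ t →
        ENNReal.ofReal (q * (if V x < Ginv t / (1 - q) ^ 2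
            then ld.Cconst ℓ m / Ψ (Ginv t / (1 - q) ^ 2) else 1)) ≤
          mc.law x {ω | ENNReal.ofReal t ≤
            modSum h V (hitTime {y | V y < ℓ}) ω} :=
  modulated_excursion_sum_lower_bound_general mc V φ Ψ ld ℓ₀' hℓ₀' h h_pos h_cont h_mono q hq Ginv
    hGinv_left
end

section
/- (Tail comparison gives a lower bound on f-variation convergence.) Let X be a Markov chain with transition kernel P and invariant probability measure π on a measurable space 𝒳. Let H, f, G : 𝒳 → [1,∞) be measurable with G = H/f and π(f) < ∞. Assume (a) there exists a : [1,∞) → (0,1] such that A(r) := r a(r) is increasing with lim_{r→∞} A(r) = ∞ and ∫_{{G ≥ r}} f(x) π(dx) ≥ a(r) for all r ≥ 1; and (b) there exists v : 𝒳 × ℕ → [1,∞), increasing in the second argument, with P^n H(x) ≤ v(x,n) for all x ∈ 𝒳 and n ∈ ℕ. Then for every n ∈ ℕ \ {0} and every x ∈ 𝒳: (1/2)·( a ∘ A^{-1} ∘ (2v) )(x,n) ≤ ‖π(·) − P^n(x,·)‖_f. -/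
open MeasureTheory ProbabilityTheory Filter Set
open scoped ENNReal NNReal

/-!
The test function `f · 𝟙{G ≥ r}` with `r = A⁻¹(2 v(x,n))` witnesses the bound. Its
`π`-integral is at least `a(r)` by the tail assumption, while under `P^n(x, ·)` Markov's
inequality `f 𝟙{G ≥ r} ≤ H / r` bounds its integral by `v(x,n) / r = a(r) / 2`.
-/

section fVar

variable {𝒳 : Type*} [MeasurableSpace 𝒳] {f : 𝒳 → ℝ} {μ ν : Measure 𝒳}

lemma fVar_bddAbove (hμ : Integrable f μ) (hν : Integrable f ν) :
    BddAbove (range fun g : {g : 𝒳 → ℝ // Measurable g ∧ ∀ x, |g x| ≤ f x} =>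
      |(∫ x, (g : 𝒳 → ℝ) x ∂μ) - ∫ x, (g : 𝒳 → ℝ) x ∂ν|) := by
  refine ⟨(∫ x, f x ∂μ) + ∫ x, f x ∂ν, ?_⟩
  rintro _ ⟨⟨g, -, hgf⟩, rfl⟩
  have bound : ∀ ρ : Measure 𝒳, Integrable f ρ → |∫ x, g x ∂ρ| ≤ ∫ x, f x ∂ρ :=
    fun ρ hρ => (Real.norm_eq_abs _).symm.trans_le
      (norm_integral_le_of_norm_le hρ (Eventually.of_forall hgf))
  exact (abs_sub _ _).trans (add_le_add (bound μ hμ) (bound ν hν))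

lemma abs_integral_sub_le_fVar {g : 𝒳 → ℝ} (hμ : Integrable f μ) (hν : Integrable f ν)
    (hg : Measurable g) (hgf : ∀ x, |g x| ≤ f x) :
    |(∫ x, g x ∂μ) - ∫ x, g x ∂ν| ≤ fVar f μ ν :=
  le_ciSup (fVar_bddAbove hμ hν) ⟨g, hg, hgf⟩

lemma setIntegral_sub_setIntegral_le_fVar {S : Set 𝒳} (hS : MeasurableSet S)
    (hf_meas : Measurable f) (hf : 0 ≤ f) (hμ : Integrable f μ) (hν : Integrable f ν) :
    (∫ x in S, f x ∂μ) - ∫ x in S, f x ∂ν ≤ fVar f μ ν := by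
  have habs : ∀ x, |S.indicator f x| ≤ f x := fun x =>
    (norm_indicator_le_norm_self f x).trans_eq (abs_of_nonneg (hf x))
  have h := abs_integral_sub_le_fVar hμ hν (hf_meas.indicator hS) habs
  rw [integral_indicator hS, integral_indicator hS] at h
  exact (le_abs_self _).trans h

end fVar

section IntegralBounds

variable {𝒳 : Type*} [MeasurableSpace 𝒳] {ν : Measure 𝒳} {H : 𝒳 → ℝ} {c : ℝ}

lemma integrable_of_lintegral_ofReal_le (hH_meas : AEStronglyMeasurable H ν) (hH : 0 ≤ᵐ[ν] H)
    (h : ∫⁻ x, ENNReal.ofReal (H x) ∂ν ≤ ENNReal.ofReal c) : Integrable H ν :=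
  (lintegral_ofReal_ne_top_iff_integrable hH_meas hH).1 (h.trans_lt ENNReal.ofReal_lt_top).ne

lemma integral_le_of_lintegral_ofReal_le (hH_meas : AEStronglyMeasurable H ν) (hH : 0 ≤ᵐ[ν] H)
    (hc : 0 ≤ c) (h : ∫⁻ x, ENNReal.ofReal (H x) ∂ν ≤ ENNReal.ofReal c) :
    ∫ x, H x ∂ν ≤ c := by
  rw [← ENNReal.ofReal_le_ofReal_iff hc,
    ofReal_integral_eq_lintegral_ofReal (integrable_of_lintegral_ofReal_le hH_meas hH h) hH]
  exact h

lemma setIntegral_le_integral_div_of_mul_le {f G : 𝒳 → ℝ} {r : ℝ} (hr : 0 < r)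
    (hG : Measurable G) (hf : 0 ≤ f) (hH : 0 ≤ H) (hH_int : Integrable H ν)
    (hGfH : ∀ x, G x * f x ≤ H x) :
    ∫ x in {x | r ≤ G x}, f x ∂ν ≤ (∫ x, H x ∂ν) / r := by
  rw [← integral_indicator (measurableSet_le measurable_const hG), ← integral_div]
  refine integral_mono_of_nonneg
    (Eventually.of_forall fun x => indicator_nonneg (fun x _ => hf x) x) (hH_int.div_const r)
    (Eventually.of_forall fun x => ?_)
  by_cases hx : r ≤ G x
  · rw [indicator_of_mem (show x ∈ {x | r ≤ G x} from hx), le_div_iff₀ hr]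
    linarith [mul_le_mul_of_nonneg_left hx (hf x), mul_comm (G x) (f x), hGfH x]
  · rw [indicator_of_notMem (show x ∉ {x | r ≤ G x} from hx)]
    exact div_nonneg (hH x) hr.le

end IntegralBounds

theorem fVariation_tail_comparison_lower_bound_general
    {𝒳 : Type*} [MeasurableSpace 𝒳]
    (mc : MarkovChain 𝒳) (π : Measure 𝒳)
    (H f G : 𝒳 → ℝ) (H_meas : Measurable H) (f_meas : Measurable f)
    (G_meas : Measurable G)
    (H_one_le : ∀ x, 1 ≤ H x) (f_one_le : ∀ x, 1 ≤ f x) (G_one_le : ∀ x, 1 ≤ G x)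
    (hG : ∀ x, G x = H x / f x) (hf_int : Integrable f π)
    (a : ℝ → ℝ) (ha_mem : ∀ r, 1 ≤ r → a r ∈ Set.Ioc (0 : ℝ) 1)
    (Ainv : ℝ → ℝ)
    (hAinv_right : ∀ t, 1 * a 1 ≤ t → Ainv t * a (Ainv t) = t ∧ 1 ≤ Ainv t)
    (ha_tail : ∀ r, 1 ≤ r → a r ≤ ∫ x in {y | r ≤ G y}, f x ∂π)
    (v : 𝒳 → ℕ → ℝ) (hv_one_le : ∀ x n, 1 ≤ v x n)
    (hv : ∀ (x : 𝒳) (n : ℕ),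
      ∫⁻ y, ENNReal.ofReal (H y) ∂(mc.stepDist x n) ≤ ENNReal.ofReal (v x n)) :
    ∀ (x : 𝒳) (n : ℕ), n ≠ 0 →
      a (Ainv (2 * v x n)) / 2 ≤ fVar f π (mc.stepDist x n) := by
  intro x n _
  have hH : 0 ≤ H := fun y => zero_le_one.trans (H_one_le y)
  have hf : 0 ≤ f := fun y => zero_le_one.trans (f_one_le y)
  have hGfH : ∀ y, G y * f y = H y := fun y => by
    rw [hG, div_mul_cancel₀ _ (by linarith [f_one_le y])]
  have hH_int : Integrable H (mc.stepDist x n) :=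
    integrable_of_lintegral_ofReal_le H_meas.aestronglyMeasurable (Eventually.of_forall hH) (hv x n)
  have hf_int_step : Integrable f (mc.stepDist x n) :=
    hH_int.mono' f_meas.aestronglyMeasurable (Eventually.of_forall fun y => by
      rw [Real.norm_eq_abs, abs_of_nonneg (hf y), ← hGfH]
      exact le_mul_of_one_le_left (hf y) (G_one_le y))
  obtain ⟨hAr, hr⟩ :=
    hAinv_right (2 * v x n) (by linarith [(ha_mem 1 le_rfl).2, hv_one_le x n])
  set r := Ainv (2 * v x n)
  have h_step_tail : ∫ y in {y | r ≤ G y}, f y ∂(mc.stepDist x n) ≤ a r / 2 := calc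
    _ ≤ (∫ y, H y ∂(mc.stepDist x n)) / r :=
      setIntegral_le_integral_div_of_mul_le (by linarith) G_meas hf hH hH_int
        (fun y => (hGfH y).le)
    _ ≤ v x n / r := by
      gcongr
      exact integral_le_of_lintegral_ofReal_le H_meas.aestronglyMeasurable
        (Eventually.of_forall hH) (by linarith [hv_one_le x n]) (hv x n)
    _ = a r / 2 := by
      field_simp
      linarith
  have hS : MeasurableSet {y | r ≤ G y} := measurableSet_le measurable_const G_meas
  linarith [ha_tail r hr, setIntegral_sub_setIntegral_le_fVar hS f_meas hf hf_int hf_int_step]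

/-- **Lemma (tail comparison gives a lower bound on `f`-variation convergence).**
Let `X` be a Markov chain with invariant probability measure `π` and `H, f, G ≥ 1`
measurable with `G = H/f` and `π(f) < ∞`. If (a) `a : [1,∞) → (0,1]` is such that
`A(r) = r a(r)` is increasing to infinity (with inverse `Ainv`) and
`∫_{{G ≥ r}} f dπ ≥ a(r)` for all `r ≥ 1`, and (b) `v` is increasing in the second
argument with `P^n H(x) ≤ v(x,n)`, then for every `n ≥ 1` and every `x`:
`(1/2)(a ∘ A⁻¹ ∘ 2v)(x,n) ≤ ‖π − P^n(x,·)‖_f`. -/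
theorem fVariation_tail_comparison_lower_bound
    {𝒳 : Type*} [MeasurableSpace 𝒳]
    (mc : MarkovChain 𝒳) (π : Measure 𝒳) [IsProbabilityMeasure π]
    (hπ_inv : π.bind (fun x => mc.P x) = π)
    (H f G : 𝒳 → ℝ) (H_meas : Measurable H) (f_meas : Measurable f)
    (G_meas : Measurable G)
    (H_one_le : ∀ x, 1 ≤ H x) (f_one_le : ∀ x, 1 ≤ f x) (G_one_le : ∀ x, 1 ≤ G x)
    (hG : ∀ x, G x = H x / f x) (hf_int : Integrable f π)
    (a : ℝ → ℝ) (ha_mem : ∀ r, 1 ≤ r → a r ∈ Set.Ioc (0 : ℝ) 1)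
    (hA_mono : StrictMonoOn (fun r => r * a r) (Set.Ici 1))
    (hA_tendsto : Tendsto (fun r => r * a r) atTop atTop)
    (Ainv : ℝ → ℝ) (hAinv_left : ∀ r, 1 ≤ r → Ainv (r * a r) = r)
    (hAinv_right : ∀ t, 1 * a 1 ≤ t → Ainv t * a (Ainv t) = t ∧ 1 ≤ Ainv t)
    (ha_tail : ∀ r, 1 ≤ r → a r ≤ ∫ x in {y | r ≤ G y}, f x ∂π)
    (v : 𝒳 → ℕ → ℝ) (hv_one_le : ∀ x n, 1 ≤ v x n) (hv_mono : ∀ x, Monotone (v x))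
    (hv : ∀ (x : 𝒳) (n : ℕ),
      ∫⁻ y, ENNReal.ofReal (H y) ∂(mc.stepDist x n) ≤ ENNReal.ofReal (v x n)) :
    ∀ (x : 𝒳) (n : ℕ), n ≠ 0 →
      a (Ainv (2 * v x n)) / 2 ≤ fVar f π (mc.stepDist x n) :=
  fVariation_tail_comparison_lower_bound_general mc π H f G H_meas f_meas G_meas H_one_le f_one_le
    G_one_le hG hf_int a ha_mem Ainv hAinv_right ha_tail v hv_one_le hv
end

section
/- (Tail comparison gives a lower bound on the L^p-Wasserstein distance.) Let X be a Markov chain with transition kernel P and invariant probability measure π on a metric space (𝒳,d), and assume that for some p ∈ [1,∞) both π and P^n(x,·) belong to 𝒫_p(𝒳) for all x ∈ 𝒳 and n ∈ ℕ. Let g : [1,∞) → [1,∞) be continuous and increasing with g(1) = 1 and lim_{r→∞} g(r) = ∞. Let W : 𝒳 → [1,∞) satisfy |W(x) − W(y)| ≤ L_W d(x,y) for all x,y ∈ 𝒳 and some L_W ∈ (0,∞). Define H := 2^{-p} W^p · (g ∘ (2W)) and assume: (a) there exists a : [1,∞) → (0,1] such that A(r) := r a(r) is increasing with lim_{r→∞}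 A(r) = ∞ and ∫_{{g∘W ≥ r}} (W(x)/2)^p π(dx) ≥ a(r) for all r ≥ 1; and (b) there exists v : 𝒳 × ℕ → [1,∞), increasing in the second argument, with P^n H(x) ≤ v(x,n) for all x ∈ 𝒳 and n ∈ ℕ. Then for every n ∈ ℕ \ {0} and every x ∈ 𝒳: ( a ∘ A^{-1} ∘ (2^p v) )(x,n)^{1/p} / (2 L_W) ≤ 𝒲_p( π, P^n(x,·) ). -/
open MeasureTheory ProbabilityTheory Filter Set
open scoped ENNReal NNReal

/-!
Fix a coupling `(X, Y)` of `π` and `P^n(x, ·)` and a level `r`. On the tail event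
`{g (W X) ≥ r}`, either `W Y ≤ W X / 2`, and then `W X / 2 ≤ L_W d(X, Y)` by the Lipschitz
bound; or `2 W Y ≥ W X`, so that `g (2 W Y) ≥ r`, and convexity of `t ↦ t^p` gives
`(W X / 2)^p ≤ (L_W d(X, Y))^p + (2^p - 1) H(Y) / r`. Integrating,
`a(r) ≤ L_W^p 𝔼 d(X, Y)^p + (2^p - 1) v / r`, and the choice `r = A⁻¹(2^p v)` turns the last
term into `(1 - 2^{-p}) a(r)`.
-/
lemma rpow_half_le_of_le_add {p D u w : ℝ} (hp : 1 ≤ p) (hD : 0 ≤ D) (hu : 0 ≤ u) (hw : 0 ≤ w)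
    (h : u ≤ D + w) : (u / 2) ^ p ≤ D ^ p + (2 ^ p - 1) * (w / 2) ^ p := by
  have h2p : (2 : ℝ) ≤ 2 ^ p := by
    simpa using Real.rpow_le_rpow_of_exponent_le one_le_two hp
  have hconv : ((D + w) / 2) ^ p ≤ (D ^ p + w ^ p) / 2 := by
    have := (convexOn_rpow hp).2 (mem_Ici.2 hD) (mem_Ici.2 hw) (by norm_num : (0 : ℝ) ≤ 1 / 2)
      (by norm_num : (0 : ℝ) ≤ 1 / 2) (by norm_num)
    rw [add_div, add_div]
    simpa only [smul_eq_mul, one_div, inv_mul_eq_div] using this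
  have hwp : w ^ p = 2 ^ p * (w / 2) ^ p := by
    rw [Real.div_rpow hw zero_le_two, mul_div_cancel₀ _ (by positivity)]
  have hDp : 0 ≤ D ^ p := Real.rpow_nonneg hD p
  have hwp0 : 0 ≤ (w / 2) ^ p := Real.rpow_nonneg (by positivity) p
  calc (u / 2) ^ p ≤ ((D + w) / 2) ^ p := by gcongr
    _ ≤ (D ^ p + w ^ p) / 2 := hconv
    _ ≤ D ^ p + (2 ^ p - 1) * (w / 2) ^ p := by rw [hwp]; nlinarith

lemma rpow_half_le_of_le_tail {g : ℝ → ℝ} (hg : MonotoneOn g (Ici 1))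
    (hg0 : ∀ s, 1 ≤ s → 0 ≤ g s) {p r D u w : ℝ} (hp : 1 ≤ p) (hr : 0 < r) (hu : 1 ≤ u)
    (hw : 1 ≤ w) (hD : 0 ≤ D) (huw : u - w ≤ D) (hgu : r ≤ g u) :
    (u / 2) ^ p ≤ D ^ p + (2 ^ p - 1) / r * (2 ^ (-p) * w ^ p * g (2 * w)) := by
  have h2p : (1 : ℝ) ≤ 2 ^ p := Real.one_le_rpow one_le_two (by linarith)
  have hwp : (2 : ℝ) ^ (-p) * w ^ p = (w / 2) ^ p := by
    rw [Real.div_rpow (by linarith) zero_le_two, Real.rpow_neg zero_le_two, inv_mul_eq_div]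
  rw [hwp]
  have hwp0 : 0 ≤ (w / 2) ^ p := Real.rpow_nonneg (by linarith) p
  rcases le_or_gt w (u / 2) with hsmall | hlarge
  · have : (u / 2) ^ p ≤ D ^ p := by gcongr; linarith
    have : 0 ≤ (2 ^ p - 1) / r * ((w / 2) ^ p * g (2 * w)) := by
      have := hg0 (2 * w) (by linarith)
      positivity
    linarith
  · have hg2w : 1 ≤ g (2 * w) / r :=
      (one_le_div hr).2 (hgu.trans (hg hu (by rw [mem_Ici]; linarith) (by linarith)))
    calc (u / 2) ^ p ≤ D ^ p + (2 ^ p - 1) * (w / 2) ^ p :=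
          rpow_half_le_of_le_add hp hD (by linarith) (by linarith) (by linarith)
      _ ≤ D ^ p + (2 ^ p - 1) * (w / 2) ^ p * (g (2 * w) / r) := by
          grw [← le_mul_of_one_le_right (by positivity) hg2w]
      _ = D ^ p + (2 ^ p - 1) / r * ((w / 2) ^ p * g (2 * w)) := by ring

lemma lintegral_tsub_lintegral_div_le_wassersteinPow {X : Type*} [PseudoMetricSpace X]
    [MeasurableSpace X] {π μ : Measure X} {p : ℝ} {f h : X → ℝ≥0∞} {c : ℝ≥0∞}
    (hh : Measurable h) (hc : c ≠ ⊤)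
    (hfh : ∀ x y, f x ≤ c * ENNReal.ofReal (dist x y ^ p) + h y) :
    (∫⁻ x, f x ∂π - ∫⁻ y, h y ∂μ) / c ≤ wassersteinPow p π μ := by
  refine le_iInf fun γ => le_iInf fun hγπ => le_iInf fun hγμ => ?_
  refine ENNReal.div_le_of_le_mul (tsub_le_iff_right.2 ?_)
  calc ∫⁻ x, f x ∂π ≤ ∫⁻ z, f z.1 ∂γ := hγπ ▸ lintegral_map_le f Prod.fst
    _ ≤ ∫⁻ z, c * ENNReal.ofReal (dist z.1 z.2 ^ p) + h z.2 ∂γ :=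
        lintegral_mono fun z => hfh z.1 z.2
    _ = (∫⁻ z, ENNReal.ofReal (dist z.1 z.2 ^ p) ∂γ) * c + ∫⁻ y, h y ∂μ := by
        rw [lintegral_add_right (g := fun z : X × X => h z.2) _ (hh.comp measurable_snd),
          lintegral_const_mul' _ _ hc, mul_comm, ← hγμ, lintegral_map hh measurable_snd]

section TailComparison

variable {X : Type*} [PseudoMetricSpace X] {g : ℝ → ℝ} {W : X → ℝ}
  {L p r : ℝ}

lemma indicator_tail_le_dist_rpow_add (hg_mono : MonotoneOn g (Ici 1))
    (hg0 : ∀ s, 1 ≤ s → 0 ≤ g s) (hW : ∀ x, 1 ≤ W x) (hL : 0 ≤ L)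
    (hWLip : ∀ x y, |W x - W y| ≤ L * dist x y) (hp : 1 ≤ p) (hr : 0 < r) (x y : X) :
    {z | r ≤ g (W z)}.indicator (fun z => ENNReal.ofReal ((W z / 2) ^ p)) x ≤
      ENNReal.ofReal (L ^ p) * ENNReal.ofReal (dist x y ^ p) +
        ENNReal.ofReal ((2 ^ p - 1) / r) * ENNReal.ofReal (2 ^ (-p) * W y ^ p * g (2 * W y)) := by
  by_cases hx : r ≤ g (W x)
  · have h2p : (1 : ℝ) ≤ 2 ^ p := Real.one_le_rpow one_le_two (by linarith)
    have hWy : 0 ≤ 2 ^ (-p) * W y ^ p * g (2 * W y) := by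
      have := hg0 (2 * W y) (by linarith [hW y])
      have := Real.rpow_nonneg (by linarith [hW y] : 0 ≤ W y) p
      positivity
    rw [indicator_of_mem (show x ∈ {z | r ≤ g (W z)} from hx),
      ← ENNReal.ofReal_mul (by positivity), ← ENNReal.ofReal_mul (by positivity),
      ← ENNReal.ofReal_add (by positivity) (by positivity), ← Real.mul_rpow hL dist_nonneg]
    exact ENNReal.ofReal_le_ofReal (rpow_half_le_of_le_tail hg_mono hg0 hp hr (hW x) (hW y)
      (by positivity) ((le_abs_self _).trans (hWLip x y)) hx)
  · rw [indicator_of_notMem (show x ∉ {z | r ≤ g (W z)} from hx)]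
    exact zero_le

variable [MeasurableSpace X] [OpensMeasurableSpace X] {π μ : Measure X} {α v : ℝ}

lemma ofReal_div_rpow_le_wassersteinPow_of_tail (hp : 1 ≤ p)
    (hg_cont : ContinuousOn g (Ici 1)) (hg_mono : MonotoneOn g (Ici 1))
    (hg0 : ∀ s, 1 ≤ s → 0 ≤ g s) (hW : ∀ x, 1 ≤ W x) (hL : 0 < L)
    (hWLip : ∀ x y, |W x - W y| ≤ L * dist x y) (hr : 0 < r) (hα : 0 ≤ α)
    (hrα : r * α = 2 ^ p * v)
    (htail : α ≤ ∫ x in {y | r ≤ g (W y)}, (W x / 2) ^ p ∂π)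
    (hv : ∫⁻ y, ENNReal.ofReal (2 ^ (-p) * W y ^ p * g (2 * W y)) ∂μ ≤ ENNReal.ofReal v) :
    ENNReal.ofReal (α / (2 * L) ^ p) ≤ wassersteinPow p π μ := by
  have hp0 : 0 < p := by linarith
  have hWc : Continuous W :=
    (LipschitzWith.of_dist_le' fun x y => (Real.dist_eq _ _).trans_le (hWLip x y)).continuous
  have hS : MeasurableSet {y | r ≤ g (W y)} :=
    measurableSet_le measurable_const (hg_cont.comp_continuous hWc hW).measurable
  have hweight : Measurable fun y => ENNReal.ofReal (2 ^ (-p) * W y ^ p * g (2 * W y)) :=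
    ((continuous_const.mul (hWc.rpow_const fun _ => Or.inr hp0.le)).mul
      (hg_cont.comp_continuous (continuous_const.mul hWc) fun y =>
        show (1 : ℝ) ≤ 2 * W y by linarith [hW y])).measurable.ennreal_ofReal
  have hmass : ENNReal.ofReal α ≤
      ∫⁻ x, {y | r ≤ g (W y)}.indicator (fun z => ENNReal.ofReal ((W z / 2) ^ p)) x ∂π := by
    rw [lintegral_indicator hS]
    refine (ENNReal.ofReal_le_ofReal (htail.trans_eq (integral_eq_lintegral_of_nonneg_ae
      (Eventually.of_forall fun x => Real.rpow_nonneg (by linarith [hW x]) p)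
      ((hWc.div_const 2).rpow_const fun _ => Or.inr hp0.le).aestronglyMeasurable))).trans ?_
    exact ENNReal.ofReal_toReal_le
  set c := (2 ^ p - 1) / r
  have hc : 0 ≤ c := div_nonneg (by linarith [Real.one_le_rpow one_le_two hp0.le]) hr.le
  have hcost : ∫⁻ y, ENNReal.ofReal c * ENNReal.ofReal (2 ^ (-p) * W y ^ p * g (2 * W y)) ∂μ ≤
      ENNReal.ofReal (c * v) := by
    rw [lintegral_const_mul' _ _ ENNReal.ofReal_ne_top, ENNReal.ofReal_mul hc]
    gcongr
  have hcv : c * v = α - 2 ^ (-p) * α := by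
    rw [Real.rpow_neg zero_le_two]
    simp only [c]
    field_simp
    linear_combination (1 - 2 ^ p) * hrα
  have hcv0 : 0 ≤ c * v := by
    rw [hcv, Real.rpow_neg zero_le_two]
    nlinarith [inv_le_one_of_one_le₀ (Real.one_le_rpow one_le_two hp0.le)]
  calc ENNReal.ofReal (α / (2 * L) ^ p)
      = (ENNReal.ofReal α - ENNReal.ofReal (c * v)) / ENNReal.ofReal (L ^ p) := by
        rw [← ENNReal.ofReal_sub _ hcv0, hcv, sub_sub_cancel,
          ← ENNReal.ofReal_div_of_pos (by positivity), Real.mul_rpow zero_le_two hL.le,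
          Real.rpow_neg zero_le_two]
        ring_nf
    _ ≤ _ := ENNReal.div_le_div_right (tsub_le_tsub hmass hcost) _
    _ ≤ wassersteinPow p π μ := lintegral_tsub_lintegral_div_le_wassersteinPow
        (hweight.const_mul _) ENNReal.ofReal_ne_top
        (indicator_tail_le_dist_rpow_add hg_mono hg0 hW hL.le hWLip hp hr)

end TailComparison

lemma ofReal_rpow_one_div_div_le {p α c : ℝ} {x : ℝ≥0∞} (hp : 0 < p) (hα : 0 ≤ α) (hc : 0 < c)
    (h : ENNReal.ofReal (α / c ^ p) ≤ x) : ENNReal.ofReal (α ^ (1 / p) / c) ≤ x ^ (1 / p) := by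
  have hroot : (c ^ p) ^ (1 / p) = c := by
    rw [← Real.rpow_mul hc.le, mul_one_div_cancel hp.ne', Real.rpow_one]
  calc ENNReal.ofReal (α ^ (1 / p) / c) = ENNReal.ofReal (α / c ^ p) ^ (1 / p) := by
        rw [ENNReal.ofReal_rpow_of_nonneg (by positivity) (by positivity),
          Real.div_rpow hα (by positivity), hroot]
    _ ≤ x ^ (1 / p) := by gcongr

theorem wasserstein_tail_comparison_lower_bound_general
    {𝒳 : Type*} [MetricSpace 𝒳] [MeasurableSpace 𝒳] [BorelSpace 𝒳]
    (mc : MarkovChain 𝒳) (π : Measure 𝒳)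
    (p : ℝ) (hp : 1 ≤ p)
    (g : ℝ → ℝ) (g_one_le : ∀ r, 1 ≤ r → 1 ≤ g r)
    (g_cont : ContinuousOn g (Set.Ici 1)) (g_mono : StrictMonoOn g (Set.Ici 1))
    (W : 𝒳 → ℝ) (W_one_le : ∀ x, 1 ≤ W x)
    (LW : ℝ) (hLW : 0 < LW) (hWLip : ∀ x y : 𝒳, |W x - W y| ≤ LW * dist x y)
    (a : ℝ → ℝ) (ha_mem : ∀ r, 1 ≤ r → a r ∈ Set.Ioc (0 : ℝ) 1)
    (Ainv : ℝ → ℝ)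
    (hAinv_right : ∀ t, 1 * a 1 ≤ t → Ainv t * a (Ainv t) = t ∧ 1 ≤ Ainv t)
    (ha_tail : ∀ r, 1 ≤ r →
      a r ≤ ∫ x in {y | r ≤ g (W y)}, (W x / 2) ^ p ∂π)
    (v : 𝒳 → ℕ → ℝ) (hv_one_le : ∀ x n, 1 ≤ v x n)
    (hv : ∀ (x : 𝒳) (n : ℕ),
      ∫⁻ y, ENNReal.ofReal ((2 : ℝ) ^ (-p) * W y ^ p * g (2 * W y)) ∂(mc.stepDist x n) ≤
        ENNReal.ofReal (v x n)) :
    ∀ (x : 𝒳) (n : ℕ), n ≠ 0 →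
      ENNReal.ofReal ((a (Ainv ((2 : ℝ) ^ p * v x n))) ^ (1 / p) / (2 * LW)) ≤
        (wassersteinPow p π (mc.stepDist x n)) ^ (1 / p) := by
  intro x n _
  have h2pv : 1 * a 1 ≤ (2 : ℝ) ^ p * v x n := by
    rw [one_mul]
    exact (ha_mem 1 le_rfl).2.trans <| one_le_mul_of_one_le_of_one_le
      (Real.one_le_rpow one_le_two (by linarith)) (hv_one_le x n)
  obtain ⟨hrα, hr⟩ := hAinv_right _ h2pv
  have hα := (ha_mem _ hr).1
  exact ofReal_rpow_one_div_div_le (by linarith) hα.le (by positivity)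
    (ofReal_div_rpow_le_wassersteinPow_of_tail hp g_cont g_mono.monotoneOn
      (fun s hs => zero_le_one.trans (g_one_le s hs)) W_one_le hLW hWLip (by linarith) hα.le hrα
      (ha_tail _ hr) (hv x n))

/-- **Lemma (tail comparison gives a lower bound on the `L^p`-Wasserstein distance).**
Let `X` be a Markov chain with invariant probability measure `π` on a metric space,
`π, P^n(x,·) ∈ 𝒫_p(𝒳)`, `g : [1,∞) → [1,∞)` continuous increasing with `g(1) = 1` and
`g → ∞`, and `W ≥ 1` Lipschitz with constant `L_W`. With
`H = 2^{-p} W^p (g ∘ 2W)`, if (a) `a : [1,∞) → (0,1]` has `A(r) = r a(r)` increasing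
to infinity (inverse `Ainv`) with `∫_{{g∘W ≥ r}} (W/2)^p dπ ≥ a(r)` for `r ≥ 1`, and
(b) `P^n H(x) ≤ v(x,n)` with `v` increasing in `n`, then for every `n ≥ 1` and `x`:
`(a ∘ A⁻¹ ∘ 2^p v)(x,n)^{1/p}/(2 L_W) ≤ 𝒲_p(π, P^n(x,·))`. -/
theorem wasserstein_tail_comparison_lower_bound
    {𝒳 : Type*} [MetricSpace 𝒳] [MeasurableSpace 𝒳] [BorelSpace 𝒳]
    (mc : MarkovChain 𝒳) (π : Measure 𝒳) [IsProbabilityMeasure π]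
    (hπ_inv : π.bind (fun x => mc.P x) = π)
    (p : ℝ) (hp : 1 ≤ p)
    (hmomπ : HasFiniteMoment p π)
    (hmomP : ∀ (x : 𝒳) (n : ℕ), HasFiniteMoment p (mc.stepDist x n))
    (g : ℝ → ℝ) (g_one_le : ∀ r, 1 ≤ r → 1 ≤ g r)
    (g_cont : ContinuousOn g (Set.Ici 1)) (g_mono : StrictMonoOn g (Set.Ici 1))
    (g_one : g 1 = 1) (g_tendsto : Tendsto g atTop atTop)
    (W : 𝒳 → ℝ) (W_one_le : ∀ x, 1 ≤ W x)
    (LW : ℝ) (hLW : 0 < LW) (hWLip : ∀ x y : 𝒳, |W x - W y| ≤ LW * dist x y)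
    (a : ℝ → ℝ) (ha_mem : ∀ r, 1 ≤ r → a r ∈ Set.Ioc (0 : ℝ) 1)
    (hA_mono : StrictMonoOn (fun r => r * a r) (Set.Ici 1))
    (hA_tendsto : Tendsto (fun r => r * a r) atTop atTop)
    (Ainv : ℝ → ℝ) (hAinv_left : ∀ r, 1 ≤ r → Ainv (r * a r) = r)
    (hAinv_right : ∀ t, 1 * a 1 ≤ t → Ainv t * a (Ainv t) = t ∧ 1 ≤ Ainv t)
    (ha_tail : ∀ r, 1 ≤ r →
      a r ≤ ∫ x in {y | r ≤ g (W y)}, (W x / 2) ^ p ∂π)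
    (v : 𝒳 → ℕ → ℝ) (hv_one_le : ∀ x n, 1 ≤ v x n) (hv_mono : ∀ x, Monotone (v x))
    (hv : ∀ (x : 𝒳) (n : ℕ),
      ∫⁻ y, ENNReal.ofReal ((2 : ℝ) ^ (-p) * W y ^ p * g (2 * W y)) ∂(mc.stepDist x n) ≤
        ENNReal.ofReal (v x n)) :
    ∀ (x : 𝒳) (n : ℕ), n ≠ 0 →
      ENNReal.ofReal ((a (Ainv ((2 : ℝ) ^ p * v x n))) ^ (1 / p) / (2 * LW)) ≤
        (wassersteinPow p π (mc.stepDist x n)) ^ (1 / p) :=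
  wasserstein_tail_comparison_lower_bound_general mc π p hp g g_one_le g_cont g_mono W W_one_le LW
    hLW hWLip a ha_mem Ainv hAinv_right ha_tail v hv_one_le hv
end
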